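/- arXiv:math/0212178 — 7 statements merged into one kernel-verified Lean document; each statement's English description precedes it below -/
import Mathlib

section
/- A univariate generalized polynomial f(x) = c_1 x^{a_1} + ... + c_m x^{a_m}, where c_1,...,c_m are real numbers and a_1 < a_2 < ... < a_m are real exponents, has at most as many roots in the positive reals as the number of sign alternations in the sequence (c_1,...,c_m); in particular it has at most m-1 positive roots. -/
/-!
Dividing `f(x) = ∑ cᵢ x^{aᵢ}` by `x^α` does not change its positive roots, and by Rolle's
theorem the derivative `∑ cᵢ (aᵢ - α) x^{aᵢ - α - 1}` of the quotient has at most one root fewer.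
If `α` lies between the exponents of a sign alternation `(j, j')`, multiplying the coefficients by
`aᵢ - α` reverses the signs up to `j` and keeps them from `j'` on: this destroys the alternation
`(j, j')` and creates no new one. Induction on the number of alternations reduces to the case
without alternations, where all nonzero coefficients have the same sign and `f` has no positive
root.
-/

open Set

noncomputable def signAlternations {m : ℕ} (c : Fin m → ℝ) : Finset (Fin m × Fin m) :=
  Finset.univ.filter (fun p => p.1 < p.2 ∧ c p.1 * c p.2 < 0 ∧ ∀ i, p.1 < i → i < p.2 → c i = 0)

section SignAlternations

variable {m : ℕ} {c : Fin m → ℝ}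

theorem mem_signAlternations {p : Fin m × Fin m} :
    p ∈ signAlternations c ↔
      p.1 < p.2 ∧ c p.1 * c p.2 < 0 ∧ ∀ i, p.1 < i → i < p.2 → c i = 0 := by
  simp [signAlternations]

theorem card_signAlternations_le : (signAlternations c).card ≤ m - 1 := by
  cases m with
  | zero => simp [signAlternations]
  | succ n =>
    have hinj : InjOn Prod.snd (signAlternations c : Set (Fin (n + 1) × Fin (n + 1))) := by
      intro p hp q hq hpq
      obtain ⟨hp, hcp, hgap_p⟩ := mem_signAlternations.1 hp
      obtain ⟨hq, hcq, hgap_q⟩ := mem_signAlternations.1 hq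
      rcases lt_trichotomy p.1 q.1 with h | h | h
      · exact absurd (hgap_p q.1 h (hpq ▸ hq)) (left_ne_zero_of_mul hcq.ne)
      · exact Prod.ext h hpq
      · exact absurd (hgap_q p.1 h (hpq ▸ hp)) (left_ne_zero_of_mul hcp.ne)
    calc (signAlternations c).card ≤ (Finset.Ioi (0 : Fin (n + 1))).card :=
          Finset.card_le_card_of_injOn Prod.snd (fun p hp =>
            Finset.mem_Ioi.2 ((Fin.zero_le _).trans_lt (mem_signAlternations.1 hp).1)) hinj
      _ = n + 1 - 1 := by simp

theorem signAlternations_nonempty_of_mul_neg {i k : Fin m} (hik : i < k) (h : c i * c k < 0) :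
    (signAlternations c).Nonempty := by
  by_cases hgap : ∀ l, i < l → l < k → c l = 0
  · exact ⟨(i, k), mem_signAlternations.2 ⟨hik, h, hgap⟩⟩
  push Not at hgap
  obtain ⟨l, hil, hlk, hl⟩ := hgap
  -- `(c i c l) (c l c k) = (c i c k) (c l)²` is negative, so one of the factors is
  have : c i * c l < 0 ∨ c l * c k < 0 := by
    by_contra! hnonneg
    nlinarith [mul_nonneg hnonneg.1 hnonneg.2, mul_self_pos.2 hl]
  rcases this with h | h
  · exact signAlternations_nonempty_of_mul_neg hil h
  · exact signAlternations_nonempty_of_mul_neg hlk h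
termination_by (k : ℕ) - i
decreasing_by all_goals omega

theorem mul_nonneg_of_signAlternations_eq_empty (h : signAlternations c = ∅) (i k : Fin m) :
    0 ≤ c i * c k := by
  by_contra! hneg
  rcases lt_trichotomy i k with hik | rfl | hki
  · exact (signAlternations_nonempty_of_mul_neg hik hneg).ne_empty h
  · exact (mul_self_nonneg _).not_gt hneg
  · rw [mul_comm] at hneg
    exact (signAlternations_nonempty_of_mul_neg hki hneg).ne_empty h

theorem signAlternations_mul_ssubset {w : Fin m → ℝ} (hw : Monotone w) {j j' : Fin m}
    (hjj' : (j, j') ∈ signAlternations c) (hj : w j < 0) (hj' : 0 < w j') :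
    signAlternations (fun i => c i * w i) ⊂ signAlternations c := by
  obtain ⟨-, hcjj', hgap⟩ := mem_signAlternations.1 hjj'
  have hzero : ∀ i, c i * w i = 0 → c i = 0 := by
    intro i hi
    by_contra hci
    have hwi : w i = 0 := (mul_eq_zero.1 hi).resolve_left hci
    exact hci (hgap i (hw.reflect_lt (hwi ▸ hj)) (hw.reflect_lt (hwi ▸ hj')))
  refine (Finset.ssubset_iff_of_subset fun p hp => ?_).2 ⟨(j, j'), hjj', fun h => ?_⟩
  · obtain ⟨hlt, hneg, hgap'⟩ := mem_signAlternations.1 hp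
    have hgap_p : ∀ i, p.1 < i → i < p.2 → c i = 0 := fun i h₁ h₂ => hzero i (hgap' i h₁ h₂)
    refine mem_signAlternations.2 ⟨hlt, ?_, hgap_p⟩
    by_contra! hnonneg
    -- otherwise `w` changes sign between `p.1` and `p.2`, which forces `p = (j, j')`
    have hw₁ : w p.1 < 0 := by
      by_contra! h
      nlinarith [mul_nonneg hnonneg (mul_nonneg h (h.trans (hw hlt.le)))]
    have hw₂ : 0 < w p.2 := by
      by_contra! h
      nlinarith [mul_nonneg hnonneg (mul_nonneg_of_nonpos_of_nonpos ((hw hlt.le).trans h) h)]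
    have hc₁ : c p.1 ≠ 0 := left_ne_zero_of_mul (left_ne_zero_of_mul hneg.ne)
    have hc₂ : c p.2 ≠ 0 := left_ne_zero_of_mul (right_ne_zero_of_mul hneg.ne)
    have hcj : c j ≠ 0 := left_ne_zero_of_mul hcjj'.ne
    have hcj' : c j' ≠ 0 := right_ne_zero_of_mul hcjj'.ne
    have h₁ : p.1 = j := by
      exact le_antisymm (not_lt.1 fun h => hc₁ (hgap _ h (hw.reflect_lt (hw₁.trans hj'))))
        (not_lt.1 fun h => hcj (hgap_p _ h (hw.reflect_lt (hj.trans hw₂))))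
    have h₂ : p.2 = j' := by
      exact le_antisymm (not_lt.1 fun h => hcj' (hgap_p _ (hw.reflect_lt (hw₁.trans hj')) h))
        (not_lt.1 fun h => hc₂ (hgap _ (hw.reflect_lt (hj.trans hw₂)) h))
    rw [h₁, h₂] at hnonneg
    exact hnonneg.not_gt hcjj'
  · nlinarith [(mem_signAlternations.1 h).2.1,
      mul_pos_of_neg_of_neg hcjj' (mul_neg_of_neg_of_pos hj hj')]

end SignAlternations

theorem Set.finite_and_ncard_le_of_forall_finset_card_le {α : Type*} {s : Set α} {n : ℕ}
    (h : ∀ t : Finset α, ↑t ⊆ s → t.card ≤ n) : s.Finite ∧ s.ncard ≤ n := by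
  have hfin : s.Finite := not_infinite.1 fun hinf => by
    obtain ⟨t, hts, ht⟩ := hinf.exists_subset_card_eq (n + 1)
    have := h t hts
    omega
  exact ⟨hfin, ncard_eq_toFinset_card s hfin ▸ h hfin.toFinset (by simp)⟩

theorem finite_zeros_and_ncard_le_of_hasDerivAt {f f' : ℝ → ℝ} {s : Set ℝ} (hs : s.OrdConnected)
    (hf : ∀ x ∈ s, HasDerivAt f (f' x) x) (hf' : {x ∈ s | f' x = 0}.Finite) :
    {x ∈ s | f x = 0}.Finite ∧ {x ∈ s | f x = 0}.ncard ≤ {x ∈ s | f' x = 0}.ncard + 1 := by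
  refine finite_and_ncard_le_of_forall_finset_card_le fun t ht => ?_
  rw [ncard_eq_toFinset_card _ hf']
  refine Finset.card_le_of_interleaved fun x hx y hy hxy _ => ?_
  obtain ⟨hxs, hfx⟩ := ht hx
  obtain ⟨hys, hfy⟩ := ht hy
  have hsub : Icc x y ⊆ s := hs.out hxs hys
  obtain ⟨z, hz, hf'z⟩ := exists_hasDerivAt_eq_zero hxy
    (fun u hu => (hf u (hsub hu)).continuousAt.continuousWithinAt) (hfx.trans hfy.symm)
    fun u hu => hf u (hsub (Ioo_subset_Icc_self hu))
  exact ⟨z, hf'.mem_toFinset.2 ⟨hsub (Ioo_subset_Icc_self hz), hf'z⟩, hz⟩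

theorem hasDerivAt_sum_mul_rpow {m : ℕ} (c a : Fin m → ℝ) {x : ℝ} (hx : 0 < x) :
    HasDerivAt (fun x => ∑ i, c i * x ^ a i) (∑ i, c i * a i * x ^ (a i - 1)) x := by
  refine HasDerivAt.fun_sum fun i _ => ?_
  simpa [mul_assoc] using (Real.hasDerivAt_rpow_const (p := a i) (Or.inl hx.ne')).const_mul (c i)

theorem zeros_sum_mul_rpow_sub {m : ℕ} (c a : Fin m → ℝ) (α : ℝ) :
    {x : ℝ | 0 < x ∧ ∑ i, c i * x ^ a i = 0} = {x ∈ Ioi 0 | ∑ i, c i * x ^ (a i - α) = 0} := by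
  ext x
  simp only [mem_ofPred_eq, mem_Ioi, and_congr_right_iff]
  intro hx
  have : ∑ i, c i * x ^ (a i - α) = (∑ i, c i * x ^ a i) / x ^ α := by
    simp only [Real.rpow_sub hx, Finset.sum_div, mul_div_assoc]
  rw [this, div_eq_zero_iff, or_iff_left (Real.rpow_pos_of_pos hx α).ne']

theorem sum_mul_rpow_ne_zero_of_signAlternations_eq_empty {m : ℕ} {c a : Fin m → ℝ}
    (h : signAlternations c = ∅) {i₀ : Fin m} (hi₀ : c i₀ ≠ 0) {x : ℝ} (hx : 0 < x) :
    ∑ i, c i * x ^ a i ≠ 0 := by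
  intro h0
  have : 0 < c i₀ * ∑ i, c i * x ^ a i := by
    rw [Finset.mul_sum]
    calc 0 < c i₀ * (c i₀ * x ^ a i₀) := by
          rw [← mul_assoc]; exact mul_pos (mul_self_pos.2 hi₀) (Real.rpow_pos_of_pos hx _)
      _ ≤ ∑ i, c i₀ * (c i * x ^ a i) := by
          refine Finset.single_le_sum (f := fun i => c i₀ * (c i * x ^ a i)) (fun i _ => ?_)
            (Finset.mem_univ i₀)
          rw [← mul_assoc]
          exact mul_nonneg (mul_nonneg_of_signAlternations_eq_empty h i₀ i)
            (Real.rpow_pos_of_pos hx _).le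
  rw [h0, mul_zero] at this
  exact this.false

theorem finite_zeros_and_ncard_le_card_signAlternations {m : ℕ} {c a : Fin m → ℝ}
    (ha : StrictMono a) (hc : ∃ i, c i ≠ 0) :
    {x : ℝ | 0 < x ∧ ∑ i, c i * x ^ a i = 0}.Finite ∧
      {x : ℝ | 0 < x ∧ ∑ i, c i * x ^ a i = 0}.ncard ≤ (signAlternations c).card := by
  rcases (signAlternations c).eq_empty_or_nonempty with h | ⟨⟨j, j'⟩, hjj'⟩
  · obtain ⟨i₀, hi₀⟩ := hc
    have : {x : ℝ | 0 < x ∧ ∑ i, c i * x ^ a i = 0} = ∅ := eq_empty_of_forall_notMem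
      fun x ⟨hx, hfx⟩ => sum_mul_rpow_ne_zero_of_signAlternations_eq_empty h hi₀ hx hfx
    simp [this]
  obtain ⟨hjj'_lt, hcjj', -⟩ := mem_signAlternations.1 hjj'
  obtain ⟨α, hjα, hαj'⟩ := exists_between (ha hjj'_lt)
  have hssub : signAlternations (fun i => c i * (a i - α)) ⊂ signAlternations c :=
    signAlternations_mul_ssubset (fun i k h => sub_le_sub_right (ha.monotone h) α) hjj'
      (sub_neg.2 hjα) (sub_pos.2 hαj')
  obtain ⟨hfin', hcard'⟩ := finite_zeros_and_ncard_le_card_signAlternations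
    (c := fun i => c i * (a i - α)) (a := fun i => a i - α - 1)
    (fun i k h => sub_lt_sub_right (sub_lt_sub_right (ha h) α) 1)
    ⟨j, mul_ne_zero (left_ne_zero_of_mul hcjj'.ne) (sub_neg.2 hjα).ne⟩
  obtain ⟨hfin, hcard⟩ := finite_zeros_and_ncard_le_of_hasDerivAt ordConnected_Ioi
    (fun x hx => hasDerivAt_sum_mul_rpow c (fun i => a i - α) hx) hfin'
  rw [zeros_sum_mul_rpow_sub c a α]
  exact ⟨hfin, hcard.trans (hcard'.trans_lt (Finset.card_lt_card hssub))⟩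
termination_by (signAlternations c).card
decreasing_by exact Finset.card_lt_card hssub

/-- Universal Generalization of Descartes' Rule of Signs:
a univariate generalized polynomial `f(x) = ∑ cᵢ x^{aᵢ}` with real exponents
`a₁ < ⋯ < a_m` has at most as many positive roots as sign alternations of `(c₁,…,c_m)`,
and in particular at most `m - 1` positive roots. -/
theorem stmt_0 (m : ℕ) (c a : Fin m → ℝ) (ha : StrictMono a) (hc : ∃ i, c i ≠ 0) :
    {x : ℝ | 0 < x ∧ ∑ i, c i * x ^ a i = 0}.Finite ∧
    {x : ℝ | 0 < x ∧ ∑ i, c i * x ^ a i = 0}.ncard ≤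
      (Finset.univ.filter (fun p : Fin m × Fin m =>
        p.1 < p.2 ∧ c p.1 * c p.2 < 0 ∧ ∀ i, p.1 < i → i < p.2 → c i = 0)).card ∧
    (Finset.univ.filter (fun p : Fin m × Fin m =>
        p.1 < p.2 ∧ c p.1 * c p.2 < 0 ∧ ∀ i, p.1 < i → i < p.2 → c i = 0)).card ≤ m - 1 := by
  obtain ⟨hfin, hcard⟩ := finite_zeros_and_ncard_le_card_signAlternations ha hc
  exact ⟨hfin, hcard, card_signAlternations_le⟩
end

section
/- Let n ≥ 1, m ≥ 2, and let c_1,...,c_m, u_1, v_1, ..., u_n, v_n be real numbers, and let (a_{ij}) be a real m×n array. Then the function f(t) = sum_{i=1}^m c_i prod_{j=1}^n (u_j + v_j t)^{a_{ij}} has at most n + n^2 + ... + n^{m-1} isolated roots in the open interval I = {t > 0 : u_j + v_j t > 0 for all j}. -/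
/-!
Write `f = ∑ᵢ pᵢ Eᵢ` with polynomials `pᵢ` of degree `≤ d` and power products
`Eᵢ(t) = ∏ⱼ (uⱼ + vⱼ t)^{bᵢⱼ}`, and induct on the number of terms. Dividing by one `Eᵢ₀`
with `pᵢ₀ ≠ 0` turns that term into the polynomial `q = pᵢ₀`. By Rolle's theorem for `f / q`,
between two zeros of `f` off the roots of `q` lies a root of `q` or a zero of the Wronskian
`f' q - f q'`; multiplied by `∏ⱼ (uⱼ + vⱼ t)`, this Wronskian is a sum of the same kind with one
term fewer and coefficients of degree `≤ 2d + n - 1`. So `f` has at most `d + 1` more zeros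
than the Wronskian, unless the Wronskian vanishes identically: then `f / q` is locally constant,
and since `f` is analytic and not identically zero, its zeros are roots of `q`. Starting from
`d = 0`, the recursion gives `n + n² + ⋯ + n^{m-1}`. If `f` vanishes identically on the open
set `I`, it has no isolated roots.
-/

open Polynomial Filter Topology

/-- The set of isolated roots, in `I = {t > 0 : ∀ j, uⱼ + vⱼ t > 0}`, of
`f(t) = ∑ᵢ cᵢ ∏ⱼ (uⱼ + vⱼ t)^{a_{ij}}`. -/
def isolRoots3 (n m : ℕ) (c : Fin m → ℝ) (u v : Fin n → ℝ)
    (a : Fin m → Fin n → ℝ) : Set ℝ :=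
  {t : ℝ | (0 < t ∧ ∀ j, 0 < u j + v j * t) ∧
    (∑ i, c i * ∏ j, (u j + v j * t) ^ a i j) = 0 ∧
    ∃ ε > 0, ∀ s : ℝ, (0 < s ∧ ∀ j, 0 < u j + v j * s) →
      (∑ i, c i * ∏ j, (u j + v j * s) ^ a i j) = 0 → |s - t| < ε → s = t}

theorem Set.finite_and_ncard_le_of_interleaved {α : Type*} [LinearOrder α] {s t : Set α}
    (ht : t.Finite) (h : ∀ x ∈ s, ∀ y ∈ s, x < y → ∃ z ∈ t, x < z ∧ z < y) :
    s.Finite ∧ s.ncard ≤ t.ncard + 1 := by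
  have hcard : ∀ s' : Finset α, ↑s' ⊆ s → s'.card ≤ t.ncard + 1 := fun s' hs' => by
    rw [Set.ncard_eq_toFinset_card t ht]
    exact Finset.card_le_of_interleaved fun x hx y hy hxy _ => by
      simpa using h x (hs' hx) y (hs' hy) hxy
  have hs : s.Finite := by
    by_contra hinf
    obtain ⟨s', hs', hs'card⟩ := Set.Infinite.exists_subset_card_eq hinf (t.ncard + 2)
    have := hcard s' hs'
    omega
  refine ⟨hs, ?_⟩
  simpa [Set.ncard_eq_toFinset_card s hs] using hcard hs.toFinset (by simp)

section Wronskian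

variable {D : Set ℝ} {f g : ℝ → ℝ}

theorem zeros_finite_and_ncard_le_of_wronskian (hD : D.OrdConnected)
    (hf : ∀ t ∈ D, DifferentiableAt ℝ f t) (hg : ∀ t ∈ D, DifferentiableAt ℝ g t)
    {R W : Set ℝ} (hR : R.Finite) (hW : W.Finite) (hgR : ∀ t ∈ D, g t = 0 → t ∈ R)
    (hfgW : ∀ t ∈ D, deriv f t * g t - f t * deriv g t = 0 → t ∈ W) :
    {t ∈ D | f t = 0}.Finite ∧ {t ∈ D | f t = 0}.ncard ≤ R.ncard + W.ncard + 1 := by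
  set Z' := {t ∈ D | f t = 0 ∧ g t ≠ 0}
  have hinter : ∀ x ∈ Z', ∀ y ∈ Z', x < y → ∃ z ∈ R ∪ W, x < z ∧ z < y := by
    rintro x ⟨hxD, hfx, hgx⟩ y ⟨hyD, hfy, hgy⟩ hxy
    have hIcc : Set.Icc x y ⊆ D := hD.out hxD hyD
    by_cases hg0 : ∃ z ∈ Set.Icc x y, g z = 0
    · obtain ⟨z, hz, hgz⟩ := hg0
      refine ⟨z, Or.inl (hgR z (hIcc hz) hgz), ?_, ?_⟩
      · exact hz.1.lt_of_ne (by rintro rfl; exact hgx hgz)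
      · exact hz.2.lt_of_ne (by rintro rfl; exact hgy hgz)
    push Not at hg0
    have hcont : ContinuousOn (fun t => f t / g t) (Set.Icc x y) := fun t ht =>
      ((hf t (hIcc ht)).continuousAt.div (hg t (hIcc ht)).continuousAt
        (hg0 t ht)).continuousWithinAt
    obtain ⟨z, hz, hderiv⟩ := exists_deriv_eq_zero hxy hcont (by simp [hfx, hfy])
    have hzIcc : z ∈ Set.Icc x y := Set.Ioo_subset_Icc_self hz
    rw [deriv_fun_div (hf z (hIcc hzIcc)) (hg z (hIcc hzIcc)) (hg0 z hzIcc),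
      div_eq_zero_iff, or_iff_left (pow_ne_zero 2 (hg0 z hzIcc))] at hderiv
    exact ⟨z, Or.inr (hfgW z (hIcc hzIcc) hderiv), hz⟩
  obtain ⟨hZ'fin, hZ'card⟩ := Set.finite_and_ncard_le_of_interleaved (hR.union hW) hinter
  have hsub : {t ∈ D | f t = 0} ⊆ Z' ∪ (R ∩ W) := by
    rintro t ⟨htD, hft⟩
    by_cases hgt : g t = 0
    · exact Or.inr ⟨hgR t htD hgt, hfgW t htD (by simp [hft, hgt])⟩
    · exact Or.inl ⟨htD, hft, hgt⟩
  have hfin := hZ'fin.union (hR.inter_of_left W)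
  refine ⟨hfin.subset hsub, ?_⟩
  calc {t ∈ D | f t = 0}.ncard ≤ (Z' ∪ (R ∩ W)).ncard := Set.ncard_le_ncard hsub hfin
    _ ≤ Z'.ncard + (R ∩ W).ncard := Set.ncard_union_le _ _
    _ ≤ (R ∪ W).ncard + (R ∩ W).ncard + 1 := by omega
    _ = R.ncard + W.ncard + 1 := by rw [Set.ncard_union_add_ncard_inter R W hR hW]

theorem eq_zero_of_wronskian_eq_zero (hDo : IsOpen D) (hDc : IsPreconnected D)
    (hfa : AnalyticOnNhd ℝ f D) (hg : ∀ t ∈ D, DifferentiableAt ℝ g t)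
    (hfg : ∀ t ∈ D, deriv f t * g t - f t * deriv g t = 0) (hf0 : ∃ t ∈ D, f t ≠ 0)
    {t₀ : ℝ} (ht₀ : t₀ ∈ D) (hft₀ : f t₀ = 0) : g t₀ = 0 := by
  by_contra hgt₀
  have hU : IsOpen (D ∩ g ⁻¹' {0}ᶜ) :=
    ContinuousOn.isOpen_inter_preimage (fun t ht => (hg t ht).continuousAt.continuousWithinAt)
      hDo isOpen_compl_singleton
  obtain ⟨δ, hδ, hball⟩ := Metric.isOpen_iff.mp hU t₀ ⟨ht₀, hgt₀⟩
  have hdiff : ∀ t ∈ Metric.ball t₀ δ, DifferentiableAt ℝ (fun t => f t / g t) t := fun t ht =>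
    ((hfa t (hball ht).1).differentiableAt).div (hg t (hball ht).1) (hball ht).2
  have hconst : ∀ t ∈ Metric.ball t₀ δ, f t / g t = f t₀ / g t₀ := fun t ht =>
    Metric.isOpen_ball.is_const_of_deriv_eq_zero (convex_ball t₀ δ).isPreconnected
      (fun t ht => (hdiff t ht).differentiableWithinAt)
      (fun t ht => by
        obtain ⟨htD, hgt⟩ := hball ht
        rw [deriv_fun_div (hfa t htD).differentiableAt (hg t htD) hgt, hfg t htD, zero_div]
        rfl)
      ht (Metric.mem_ball_self hδ)
  have hev : f =ᶠ[𝓝 t₀] 0 := by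
    filter_upwards [Metric.ball_mem_nhds t₀ hδ] with t ht
    have h := hconst t ht
    rw [hft₀, zero_div, div_eq_zero_iff] at h
    exact h.resolve_right (hball ht).2
  obtain ⟨t₁, ht₁, hft₁⟩ := hf0
  exact hft₁ (hfa.eqOn_zero_of_preconnected_of_eventuallyEq_zero hDc ht₀ hev ht₁)

end Wronskian

section PowProd

variable {κ : Type*} [Fintype κ]

noncomputable def powProd (u v b : κ → ℝ) (t : ℝ) : ℝ := ∏ j, (u j + v j * t) ^ b j

variable {u v : κ → ℝ} {t : ℝ}

theorem eventually_forall_pos_of_forall_pos (ht : ∀ j, 0 < u j + v j * t) :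
    ∀ᶠ s in 𝓝 t, ∀ j, 0 < u j + v j * s :=
  eventually_all.2 fun j =>
    (continuous_const.add (continuous_const.mul continuous_id)).continuousAt.eventually
      (lt_mem_nhds (ht j))

theorem powProd_pos (b : κ → ℝ) (ht : ∀ j, 0 < u j + v j * t) : 0 < powProd u v b t :=
  Finset.prod_pos fun j _ => Real.rpow_pos_of_pos (ht j) _

theorem powProd_add (b b' : κ → ℝ) (ht : ∀ j, 0 < u j + v j * t) :
    powProd u v (b + b') t = powProd u v b t * powProd u v b' t := by
  simp only [powProd, Pi.add_apply, ← Finset.prod_mul_distrib]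
  exact Finset.prod_congr rfl fun j _ => Real.rpow_add (ht j) _ _

theorem powProd_eq_exp (b : κ → ℝ) (ht : ∀ j, 0 < u j + v j * t) :
    powProd u v b t = Real.exp (∑ j, Real.log (u j + v j * t) * b j) := by
  rw [Real.exp_sum]
  exact Finset.prod_congr rfl fun j _ => Real.rpow_def_of_pos (ht j) _

theorem powProd_eventuallyEq_exp (b : κ → ℝ) (ht : ∀ j, 0 < u j + v j * t) :
    powProd u v b =ᶠ[𝓝 t] fun s => Real.exp (∑ j, Real.log (u j + v j * s) * b j) :=
  (eventually_forall_pos_of_forall_pos ht).mono fun _ hs => powProd_eq_exp b hs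

theorem hasDerivAt_powProd (b : κ → ℝ) (ht : ∀ j, 0 < u j + v j * t) :
    HasDerivAt (powProd u v b) (powProd u v b t * ∑ j, b j * v j / (u j + v j * t)) t := by
  have hlin : ∀ j, HasDerivAt (fun s => u j + v j * s) (v j) t := fun j => by
    simpa using ((hasDerivAt_id t).const_mul (v j)).const_add (u j)
  have hsum : HasDerivAt (fun s => ∑ j, Real.log (u j + v j * s) * b j)
      (∑ j, b j * v j / (u j + v j * t)) t := by
    refine HasDerivAt.fun_sum fun j _ => ?_
    exact (((hlin j).log (ht j).ne').mul_const (b j)).congr_deriv (by ring)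
  rw [powProd_eq_exp b ht]
  exact (hsum.exp).congr_of_eventuallyEq (powProd_eventuallyEq_exp b ht)

theorem analyticAt_powProd (b : κ → ℝ) (ht : ∀ j, 0 < u j + v j * t) :
    AnalyticAt ℝ (powProd u v b) t := by
  refine AnalyticAt.congr ?_ (powProd_eventuallyEq_exp b ht).symm
  refine analyticAt_rexp.comp (Finset.analyticAt_fun_sum _ fun j _ => ?_)
  refine AnalyticAt.mul ?_ analyticAt_const
  exact (analyticAt_const.add (analyticAt_const.mul analyticAt_id)).log (ht j)

end PowProd

theorem natDegree_prod_linear_le {κ : Type*} (u v : κ → ℝ) (s : Finset κ) :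
    (∏ j ∈ s, (C (v j) * X + C (u j))).natDegree ≤ s.card :=
  (natDegree_prod_le _ _).trans <| (Finset.sum_le_sum fun j _ => natDegree_linear_le).trans_eq
    (by simp)

section LinearFactors

variable {κ : Type*} [Fintype κ] (u v : κ → ℝ)

noncomputable def linProd : ℝ[X] := ∏ j, (C (v j) * X + C (u j))

/-- `linProd u v` times the logarithmic derivative `∑ⱼ bⱼ vⱼ / (uⱼ + vⱼ t)` of `powProd u v b`. -/
noncomputable def logDerivNumer [DecidableEq κ] (b : κ → ℝ) : ℝ[X] :=
  ∑ j, C (b j * v j) * ∏ k ∈ Finset.univ.erase j, (C (v k) * X + C (u k))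

/-- The coefficient of `powProd u v b` in `linProd u v · W(q, p · powProd u v b)`. -/
noncomputable def wronskianCoeff [DecidableEq κ] (q p : ℝ[X]) (b : κ → ℝ) : ℝ[X] :=
  wronskian q p * linProd u v + p * q * logDerivNumer u v b

variable {u v}

theorem eval_linProd (t : ℝ) : (linProd u v).eval t = ∏ j, (u j + v j * t) := by
  simp [linProd, eval_prod, add_comm]

theorem eval_logDerivNumer [DecidableEq κ] (b : κ → ℝ) {t : ℝ} (ht : ∀ j, u j + v j * t ≠ 0) :
    (logDerivNumer u v b).eval t = (∏ j, (u j + v j * t)) * ∑ j, b j * v j / (u j + v j * t) := by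
  simp only [logDerivNumer, eval_finsetSum, eval_mul, eval_C, eval_prod, eval_add, eval_X,
    add_comm (v _ * t), Finset.mul_sum]
  refine Finset.sum_congr rfl fun j _ => ?_
  rw [← Finset.mul_prod_erase Finset.univ (fun k => u k + v k * t) (Finset.mem_univ j)]
  field_simp [ht j]
  simp only [mul_comm t]

theorem natDegree_linProd : (linProd u v).natDegree ≤ Fintype.card κ :=
  natDegree_prod_linear_le u v _

theorem natDegree_logDerivNumer [DecidableEq κ] (b : κ → ℝ) :
    (logDerivNumer u v b).natDegree ≤ Fintype.card κ - 1 :=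
  natDegree_sum_le_of_forall_le _ _ fun j _ => (natDegree_C_mul_le _ _).trans <|
    (natDegree_prod_linear_le u v _).trans_eq <| by simp [Finset.card_erase_of_mem]

theorem wronskianCoeff_self_zero [DecidableEq κ] (q : ℝ[X]) : wronskianCoeff u v q q 0 = 0 := by
  simp [wronskianCoeff, logDerivNumer, wronskian_self_eq_zero]

theorem natDegree_wronskianCoeff [DecidableEq κ] {q p : ℝ[X]} {d : ℕ} (hq : q.natDegree ≤ d)
    (hp : p.natDegree ≤ d) (b : κ → ℝ) :
    (wronskianCoeff u v q p b).natDegree ≤ 2 * d + (Fintype.card κ - 1) := by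
  refine natDegree_add_le_of_degree_le ?_ ?_
  · by_cases hw : wronskian q p = 0
    · simp [hw]
    have hqp := natDegree_wronskian_lt_add hw
    have hG := natDegree_linProd (u := u) (v := v)
    exact natDegree_mul_le_of_le le_rfl le_rfl |>.trans (by omega)
  · exact natDegree_mul_le_of_le (natDegree_mul_le_of_le hp hq) (natDegree_logDerivNumer b)
      |>.trans (by omega)

end LinearFactors

section PolyPowSum

variable {κ ι : Type*} [Fintype κ]

noncomputable def polyPowSum (u v : κ → ℝ) (s : Finset ι) (p : ι → ℝ[X]) (b : ι → κ → ℝ)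
    (t : ℝ) : ℝ :=
  ∑ i ∈ s, (p i).eval t * powProd u v (b i) t

variable {u v : κ → ℝ} {s : Finset ι} {p : ι → ℝ[X]} {b : ι → κ → ℝ} {t : ℝ}

theorem polyPowSum_eq_powProd_mul (ht : ∀ j, 0 < u j + v j * t) (b₀ : κ → ℝ) :
    polyPowSum u v s p b t = powProd u v b₀ t * polyPowSum u v s p (fun i => b i - b₀) t := by
  simp only [polyPowSum, Finset.mul_sum]
  refine Finset.sum_congr rfl fun i _ => ?_
  rw [mul_left_comm, ← powProd_add _ _ ht, add_sub_cancel]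

theorem hasDerivAt_polyPowSum (ht : ∀ j, 0 < u j + v j * t) :
    HasDerivAt (polyPowSum u v s p b) (∑ i ∈ s, ((p i).derivative.eval t +
      (p i).eval t * ∑ j, b i j * v j / (u j + v j * t)) * powProd u v (b i) t) t := by
  refine HasDerivAt.fun_sum fun i _ => ?_
  exact (((p i).hasDerivAt t).mul (hasDerivAt_powProd (b i) ht)).congr_deriv (by ring)

theorem analyticAt_polyPowSum (ht : ∀ j, 0 < u j + v j * t) :
    AnalyticAt ℝ (polyPowSum u v s p b) t := by
  have hp (i : ι) : AnalyticAt ℝ (fun x => (p i).eval x) t := by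
    have h := analyticAt_id.aeval_polynomial (𝕜 := ℝ) (z := t) (p i)
    simp only [id, coe_aeval_eq_eval] at h
    exact h
  exact Finset.analyticAt_fun_sum _ fun i _ => (hp i).mul (analyticAt_powProd (b i) ht)

theorem eval_linProd_mul_wronskian [DecidableEq κ] (ht : ∀ j, 0 < u j + v j * t) (q : ℝ[X]) :
    (linProd u v).eval t *
      (deriv (polyPowSum u v s p b) t * q.eval t - polyPowSum u v s p b t * q.derivative.eval t) =
    polyPowSum u v s (fun i => wronskianCoeff u v q (p i) (b i)) b t := by
  rw [(hasDerivAt_polyPowSum ht).deriv, polyPowSum, polyPowSum, Finset.sum_mul, Finset.sum_mul,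
    ← Finset.sum_sub_distrib, Finset.mul_sum]
  refine Finset.sum_congr rfl fun i _ => ?_
  simp only [wronskianCoeff, wronskian, eval_add, eval_mul, eval_sub,
    eval_logDerivNumer _ fun j => (ht j).ne', eval_linProd]
  ring

theorem wronskian_polyPowSum_eq_zero_iff [DecidableEq κ] [DecidableEq ι]
    (ht : ∀ j, 0 < u j + v j * t) {i₀ : ι} (hb : b i₀ = 0) :
    deriv (polyPowSum u v s p b) t * (p i₀).eval t -
        polyPowSum u v s p b t * deriv (fun x => (p i₀).eval x) t = 0 ↔
      polyPowSum u v (s.erase i₀) (fun i => wronskianCoeff u v (p i₀) (p i) (b i)) b t = 0 := by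
  have hG : (linProd u v).eval t ≠ 0 := by
    rw [eval_linProd]
    exact (Finset.prod_pos fun j _ => ht j).ne'
  rw [Polynomial.deriv, ← mul_eq_zero_iff_left hG, eval_linProd_mul_wronskian ht, polyPowSum,
    polyPowSum, Finset.sum_erase s (by simp [hb, wronskianCoeff_self_zero])]

end PolyPowSum

theorem two_pow_sub_one_mul_add_one_le_pow {n : ℕ} (hn : 1 ≤ n) (k : ℕ) :
    (2 ^ k - 1) * (n - 1) + 1 ≤ n ^ k := by
  obtain ⟨j, rfl⟩ : ∃ j, n = j + 1 := ⟨n - 1, by omega⟩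
  simp only [Nat.add_sub_cancel]
  induction k with
  | zero => simp
  | succ k ih =>
    have hj : j * 2 ^ k ≤ j * (j + 1) ^ k := by
      rcases Nat.eq_zero_or_pos j with rfl | hj0
      · simp
      · exact Nat.mul_le_mul_left j (Nat.pow_le_pow_left (by omega) k)
    have h2 : 1 ≤ 2 ^ k := Nat.one_le_two_pow
    calc (2 ^ (k + 1) - 1) * j + 1 = ((2 ^ k - 1) * j + 1) + j * 2 ^ k := by
          rw [show 2 ^ (k + 1) - 1 = (2 ^ k - 1) + 2 ^ k by rw [pow_succ]; omega]
          ring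
      _ ≤ (j + 1) ^ k + j * (j + 1) ^ k := add_le_add ih hj
      _ = (j + 1) ^ (k + 1) := by ring

/-- The zero bound for a `polyPowSum` of `k` terms with `n` linear factors and polynomial
coefficients of degree at most `d`. -/
def zeroBound (n k d : ℕ) : ℕ := (2 ^ k - 1) * d + ∑ i ∈ Finset.Icc 1 (k - 1), n ^ i

theorem le_zeroBound (n : ℕ) {k : ℕ} (hk : 1 ≤ k) (d : ℕ) : d ≤ zeroBound n k d := by
  have : 1 ≤ 2 ^ k - 1 := Nat.le_sub_of_add_le (Nat.pow_le_pow_right two_pos hk)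
  exact (Nat.le_mul_of_pos_left d this).trans (Nat.le_add_right _ _)

theorem zeroBound_step {n : ℕ} (hn : 1 ≤ n) {k : ℕ} (hk : 1 ≤ k) (d : ℕ) :
    zeroBound n k (2 * d + (n - 1)) + d + 1 ≤ zeroBound n (k + 1) d := by
  obtain ⟨k, rfl⟩ : ∃ k', k = k' + 1 := ⟨k - 1, by omega⟩
  have hkey := two_pow_sub_one_mul_add_one_le_pow hn (k + 1)
  have hpow : 2 ^ (k + 2) - 1 = 2 * (2 ^ (k + 1) - 1) + 1 := by
    have : 1 ≤ 2 ^ (k + 1) := Nat.one_le_two_pow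
    rw [pow_succ]; omega
  simp only [zeroBound, hpow, show k + 1 + 1 = k + 2 from rfl, show k + 2 - 1 = k + 1 from rfl,
    Nat.add_sub_cancel, Finset.sum_Icc_succ_top (by omega : 1 ≤ k + 1)]
  nlinarith

theorem polyPowSum_zeros_finite_and_ncard_le {κ ι : Type*} [Fintype κ] {u v : κ → ℝ}
    (hκ : 1 ≤ Fintype.card κ) {D : Set ℝ} (hDo : IsOpen D) (hDc : D.OrdConnected)
    (hD : ∀ t ∈ D, ∀ j, 0 < u j + v j * t) (s : Finset ι) (p : ι → ℝ[X]) (b : ι → κ → ℝ)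
    {d : ℕ} (hp : ∀ i ∈ s, (p i).natDegree ≤ d) (hf : ∃ t ∈ D, polyPowSum u v s p b t ≠ 0) :
    {t ∈ D | polyPowSum u v s p b t = 0}.Finite ∧
      {t ∈ D | polyPowSum u v s p b t = 0}.ncard ≤ zeroBound (Fintype.card κ) s.card d := by
  classical
  induction s using Finset.strongInduction generalizing p b d with
  | H s ih =>
  obtain ⟨t₁, ht₁, hft₁⟩ := hf
  obtain ⟨i₀, hi₀, hpi₀⟩ : ∃ i₀ ∈ s, p i₀ ≠ 0 := by
    obtain ⟨i, hi, hne⟩ := Finset.exists_ne_zero_of_sum_ne_zero hft₁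
    exact ⟨i, hi, fun h => hne (by simp [h])⟩
  set c : ι → κ → ℝ := fun i => b i - b i₀
  set h := polyPowSum u v s p c
  set q := p i₀
  have hfh (t : ℝ) (ht : t ∈ D) : polyPowSum u v s p b t = 0 ↔ h t = 0 := by
    rw [polyPowSum_eq_powProd_mul (hD t ht) (b i₀), mul_eq_zero,
      or_iff_right (powProd_pos _ (hD t ht)).ne']
  rw [Set.sep_ext_iff.2 hfh]
  have hh : ∃ t ∈ D, h t ≠ 0 := ⟨t₁, ht₁, (hfh t₁ ht₁).not.1 hft₁⟩
  set H := polyPowSum u v (s.erase i₀) (fun i => wronskianCoeff u v q (p i) (c i)) c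
  have hwH (t : ℝ) (ht : t ∈ D) :
      deriv h t * q.eval t - h t * deriv (fun x => q.eval x) t = 0 ↔ H t = 0 :=
    wronskian_polyPowSum_eq_zero_iff (hD t ht) (sub_self _)
  have hdh (t : ℝ) (ht : t ∈ D) : DifferentiableAt ℝ h t :=
    (hasDerivAt_polyPowSum (hD t ht)).differentiableAt
  have hdq (t : ℝ) (_ : t ∈ D) : DifferentiableAt ℝ (fun x => q.eval x) t := q.differentiableAt
  have hR (t : ℝ) (_ : t ∈ D) (hqt : q.eval t = 0) : t ∈ (q.roots.toFinset : Set ℝ) := by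
    simpa [hpi₀] using hqt
  have hRcard : (q.roots.toFinset : Set ℝ).ncard ≤ d := by
    rw [Set.ncard_coe_finset]
    exact (Multiset.toFinset_card_le _).trans (q.card_roots'.trans (hp i₀ hi₀))
  by_cases hH : ∃ t ∈ D, H t ≠ 0
  · obtain ⟨hWfin, hWcard⟩ := ih _ (Finset.erase_ssubset hi₀) _ c
      (fun i hi => natDegree_wronskianCoeff (hp i₀ hi₀) (hp i (Finset.mem_of_mem_erase hi)) _) hH
    obtain ⟨hZfin, hZcard⟩ := zeros_finite_and_ncard_le_of_wronskian hDc hdh hdq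
      (Finset.finite_toSet _) hWfin hR fun t ht hw => ⟨ht, (hwH t ht).1 hw⟩
    have hk : 1 ≤ (s.erase i₀).card := by
      obtain ⟨t, -, hHt⟩ := hH
      obtain ⟨i, hi, -⟩ := Finset.exists_ne_zero_of_sum_ne_zero hHt
      exact Finset.card_pos.2 ⟨i, hi⟩
    refine ⟨hZfin, hZcard.trans ?_⟩
    rw [← Finset.card_erase_add_one hi₀]
    have := zeroBound_step hκ hk d
    omega
  · push Not at hH
    have hsub : {t ∈ D | h t = 0} ⊆ q.roots.toFinset := fun t ⟨ht, hht⟩ =>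
      hR t ht <| eq_zero_of_wronskian_eq_zero hDo hDc.isPreconnected
        (fun t ht => analyticAt_polyPowSum (hD t ht)) hdq (fun t ht => (hwH t ht).2 (hH t ht))
        hh ht hht
    exact ⟨(Finset.finite_toSet _).subset hsub,
      (Set.ncard_le_ncard hsub (Finset.finite_toSet _)).trans
        (hRcard.trans (le_zeroBound _ (Finset.card_pos.2 ⟨i₀, hi₀⟩) d))⟩

theorem isOpen_setOf_pos_and_forall_pos {κ : Type*} [Fintype κ] (u v : κ → ℝ) :
    IsOpen {t : ℝ | 0 < t ∧ ∀ j, 0 < u j + v j * t} :=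
  isOpen_iff_mem_nhds.2 fun _ ht =>
    (eventually_gt_nhds ht.1).and (eventually_forall_pos_of_forall_pos ht.2)

theorem ordConnected_setOf_pos_and_forall_pos {κ : Type*} (u v : κ → ℝ) :
    {t : ℝ | 0 < t ∧ ∀ j, 0 < u j + v j * t}.OrdConnected :=
  ⟨fun _ hx _ hy _ ht => ⟨hx.1.trans_le ht.1, fun j => by
    rcases le_total 0 (v j) with h | h <;> nlinarith [hx.2 j, hy.2 j, ht.1, ht.2]⟩⟩

theorem stmt_3_general (n m : ℕ) (hn : 1 ≤ n) (c : Fin m → ℝ) (u v : Fin n → ℝ)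
    (a : Fin m → Fin n → ℝ) :
    (isolRoots3 n m c u v a).Finite ∧
    (isolRoots3 n m c u v a).ncard ≤ ∑ k ∈ Finset.Icc 1 (m - 1), n ^ k := by
  set D := {t : ℝ | 0 < t ∧ ∀ j, 0 < u j + v j * t}
  set f := polyPowSum u v Finset.univ (fun i => C (c i)) a
  have hf (t : ℝ) : f t = ∑ i, c i * ∏ j, (u j + v j * t) ^ a i j := by
    simp [f, polyPowSum, powProd]
  by_cases hf0 : ∃ t ∈ D, f t ≠ 0
  · obtain ⟨hfin, hcard⟩ := polyPowSum_zeros_finite_and_ncard_le (by simpa using hn)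
      (isOpen_setOf_pos_and_forall_pos u v) (ordConnected_setOf_pos_and_forall_pos u v)
      (fun t ht => ht.2) _ _ _ (d := 0) (by simp) hf0
    have hsub : isolRoots3 n m c u v a ⊆ {t ∈ D | f t = 0} :=
      fun t ⟨htD, hft, _⟩ => ⟨htD, by rwa [hf]⟩
    refine ⟨hfin.subset hsub, (Set.ncard_le_ncard hsub hfin).trans ?_⟩
    exact hcard.trans_eq (by simp [zeroBound])
  · push Not at hf0
    suffices isolRoots3 n m c u v a = ∅ by simp [this]
    refine Set.eq_empty_of_forall_notMem fun t ⟨htD, _, ε, hε, hiso⟩ => ?_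
    have hev : ∀ᶠ s in 𝓝 t, s = t := by
      filter_upwards [(isOpen_setOf_pos_and_forall_pos u v).mem_nhds htD,
        Metric.ball_mem_nhds t hε] with s hs hsε
      exact hiso s hs (by rw [← hf]; exact hf0 s hs) (by simpa [Real.dist_eq] using hsε)
    obtain ⟨s, hst, hs⟩ := ((hev.filter_mono nhdsWithin_le_nhds).and
      (self_mem_nhdsWithin (s := {t}ᶜ))).exists
    exact hs hst

/-- `f(t) = ∑_{i=1}^m cᵢ ∏_{j=1}^n (uⱼ + vⱼ t)^{a_{ij}}` has at most
`n + n² + ⋯ + n^{m-1}` isolated roots in `I = {t > 0 : ∀ j, uⱼ + vⱼ t > 0}`. -/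
theorem stmt_3 (n m : ℕ) (hn : 1 ≤ n) (hm : 2 ≤ m) (c : Fin m → ℝ) (u v : Fin n → ℝ)
    (a : Fin m → Fin n → ℝ) :
    (isolRoots3 n m c u v a).Finite ∧
    (isolRoots3 n m c u v a).ncard ≤ ∑ k ∈ Finset.Icc 1 (m - 1), n ^ k :=
  stmt_3_general n m hn c u v a
end

section
/- The pair of polynomials f_1(x,y) = x^{108} + 1.1 y^{54} - 1.1 y and f_2(x,y) = y^{108} + 1.1 x^{54} - 1.1 x has at least 5 common roots in the open positive quadrant {(x,y) : x > 0, y > 0}. -/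
/-!
Write `g x = 1.1 (x - x ^ 54)`, so that the system reads `x ^ 108 = g y`, `y ^ 108 = g x`, and let
`φ x = (g x) ^ (1/108)`. The common roots in the open unit square are the points `(x, φ x)` with
`φ (φ x) = x`. The continuous function `ψ = φ ∘ φ - id` changes sign five times on
`[0.9, 0.999999]`: at each test point `t`, an interval `[a, b]` containing `φ t` is read off from
`g t`, and the crude bounds `1.1 (a - b ^ 54) ≤ g ≤ 1.1 (b - a ^ 54)` on `[a, b]` already decide
the sign of `ψ t`. The intermediate value theorem then gives five distinct fixed points of `φ ∘ φ`.
-/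

open Set

namespace Haas

/-- Taking the positive part first makes `root n` monotone on all of `ℝ` and makes `0 < root n u`
force `0 < u`; `Real.rpow` alone is positive on negative bases. -/
noncomputable def root (n : ℕ) (u : ℝ) : ℝ := max u 0 ^ (n⁻¹ : ℝ)

section Root

variable {n : ℕ} {u v a : ℝ}

lemma root_pos (hu : 0 < u) : 0 < root n u :=
  Real.rpow_pos_of_pos (lt_max_of_lt_left hu) _

lemma pos_of_root_pos (hn : n ≠ 0) (h : 0 < root n u) : 0 < u := by
  by_contra! hu
  have hexp : (n⁻¹ : ℝ) ≠ 0 := by positivity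
  simp [root, max_eq_right hu, Real.zero_rpow hexp] at h

lemma root_pow (hn : n ≠ 0) (hu : 0 ≤ u) : root n u ^ n = u := by
  rw [root, max_eq_left hu, Real.rpow_inv_natCast_pow hu hn]

lemma root_pow_self (hn : n ≠ 0) (ha : 0 ≤ a) : root n (a ^ n) = a := by
  rw [root, max_eq_left (pow_nonneg ha n), Real.pow_rpow_inv_natCast ha hn]

lemma monotone_root : Monotone (root n) := fun _ _ h =>
  Real.rpow_le_rpow (le_max_right _ _) (max_le_max_right 0 h) (by positivity)

lemma root_lt_root (hn : n ≠ 0) (h : u < v) (hv : 0 < v) : root n u < root n v := by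
  refine Real.rpow_lt_rpow (le_max_right _ _) ?_ (by positivity)
  rw [max_eq_left hv.le]
  exact max_lt h hv

lemma continuous_root : Continuous (root n) :=
  (continuous_id.max continuous_const).rpow_const fun _ => Or.inr (by positivity)

end Root

lemma exists_mem_Ioo_eq_zero_of_mul_neg {f : ℝ → ℝ} {a b : ℝ} (hab : a ≤ b)
    (hf : ContinuousOn f (Icc a b)) (h : f a * f b < 0) : ∃ c ∈ Ioo a b, f c = 0 := by
  rcases mul_neg_iff.1 h with ⟨ha, hb⟩ | ⟨ha, hb⟩
  · exact intermediate_value_Ioo' hab hf ⟨hb, ha⟩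
  · exact intermediate_value_Ioo hab hf ⟨ha, hb⟩

lemma exists_strictMono_zeros_of_sign_changes {f : ℝ → ℝ} (hf : Continuous f) {m : ℕ}
    {t : Fin (m + 1) → ℝ} (ht : StrictMono t)
    (hsign : ∀ i : Fin m, f (t i.castSucc) * f (t i.succ) < 0) :
    ∃ c : Fin m → ℝ, StrictMono c ∧ ∀ i, c i ∈ Ioo (t i.castSucc) (t i.succ) ∧ f (c i) = 0 := by
  choose c hc hfc using fun i : Fin m =>
    exists_mem_Ioo_eq_zero_of_mul_neg (ht Fin.castSucc_lt_succ).le hf.continuousOn (hsign i)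
  refine ⟨c, fun i j hij => ?_, fun i => ⟨hc i, hfc i⟩⟩
  calc c i < t i.succ := (hc i).2
    _ ≤ t j.castSucc := ht.monotone (Fin.succ_le_castSucc_iff.2 hij)
    _ < c j := (hc j).1

noncomputable def g (x : ℝ) : ℝ := 11 / 10 * (x - x ^ 54)

noncomputable def φ (x : ℝ) : ℝ := root 108 (g x)

noncomputable def ψ (x : ℝ) : ℝ := φ (φ x) - x

lemma continuous_ψ : Continuous ψ := by
  have hφ : Continuous φ := continuous_root.comp (by unfold g; fun_prop)
  exact (hφ.comp hφ).sub continuous_id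

lemma g_pos {x : ℝ} (hx0 : 0 < x) (hx1 : x < 1) : 0 < g x := by
  have := pow_lt_self_of_lt_one₀ hx0 hx1 (by norm_num : 1 < 54)
  unfold g; linarith

lemma commonRoot_of_ψ_eq_zero {x : ℝ} (hx0 : 0 < x) (hx1 : x < 1) (hψ : ψ x = 0) :
    0 < x ∧ 0 < φ x ∧
      x ^ (108 : ℕ) + 1.1 * φ x ^ (54 : ℕ) - 1.1 * φ x = 0 ∧
      φ x ^ (108 : ℕ) + 1.1 * x ^ (54 : ℕ) - 1.1 * x = 0 := by
  have hgx : 0 < g x := g_pos hx0 hx1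
  have hφφ : φ (φ x) = x := sub_eq_zero.1 hψ
  have hgφ : 0 < g (φ x) := pos_of_root_pos (by norm_num) (hφφ.symm ▸ hx0)
  have hy : φ x ^ 108 = g x := root_pow (by norm_num) hgx.le
  have hx : x ^ 108 = g (φ x) := by
    calc x ^ 108 = φ (φ x) ^ 108 := by rw [hφφ]
      _ = g (φ x) := root_pow (by norm_num) hgφ.le
  refine ⟨hx0, root_pos hgx, ?_, ?_⟩
  · rw [hx, g]; ring
  · rw [hy, g]; ring

lemma le_g_of_mem_Icc {a b u : ℝ} (ha : 0 ≤ a) (hu : u ∈ Icc a b) : 11 / 10 * (a - b ^ 54) ≤ g u := by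
  have := pow_le_pow_left₀ (ha.trans hu.1) hu.2 54
  unfold g; linarith [hu.1]

lemma g_le_of_mem_Icc {a b u : ℝ} (ha : 0 ≤ a) (hu : u ∈ Icc a b) : g u ≤ 11 / 10 * (b - a ^ 54) := by
  have := pow_le_pow_left₀ ha hu.1 54
  unfold g; linarith [hu.2]

lemma φ_mem_Icc {t a b : ℝ} (ha : 0 ≤ a) (hb : 0 ≤ b) (hga : a ^ 108 ≤ g t)
    (hgb : g t ≤ b ^ 108) : φ t ∈ Icc a b :=
  ⟨(root_pow_self (by norm_num) ha).symm.trans_le (monotone_root hga),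
    (monotone_root hgb).trans_eq (root_pow_self (by norm_num) hb)⟩

lemma ψ_pos_of_bounds {t a b : ℝ} (ht : 0 ≤ t) (ha : 0 ≤ a) (hb : 0 ≤ b)
    (hga : a ^ 108 ≤ g t) (hgb : g t ≤ b ^ 108) (hlt : t ^ 108 < 11 / 10 * (a - b ^ 54)) :
    0 < ψ t := by
  have hg : t ^ 108 < g (φ t) := hlt.trans_le (le_g_of_mem_Icc ha (φ_mem_Icc ha hb hga hgb))
  have : t < φ (φ t) := (root_pow_self (by norm_num) ht).symm.trans_lt
    (root_lt_root (by norm_num) hg ((pow_nonneg ht _).trans_lt hg))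
  exact sub_pos.2 this

lemma ψ_neg_of_bounds {t a b : ℝ} (ht : 0 < t) (ha : 0 ≤ a) (hb : 0 ≤ b)
    (hga : a ^ 108 ≤ g t) (hgb : g t ≤ b ^ 108) (hlt : 11 / 10 * (b - a ^ 54) < t ^ 108) :
    ψ t < 0 := by
  have hg : g (φ t) < t ^ 108 := (g_le_of_mem_Icc ha (φ_mem_Icc ha hb hga hgb)).trans_lt hlt
  have : φ (φ t) < t := (root_lt_root (by norm_num) hg (by positivity)).trans_eq
    (root_pow_self (by norm_num) ht.le)
  exact sub_neg.2 this

noncomputable def testPoint : Fin 6 → ℝ :=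
  ![9 / 10, 934 / 1000, 95 / 100, 995 / 1000, 999992 / 1000000, 999999 / 1000000]

lemma testPoint_strictMono : StrictMono testPoint := by
  refine Fin.strictMono_iff_lt_succ.2 fun i => ?_
  fin_cases i <;> simp [testPoint] <;> norm_num

lemma testPoint_mem_Ioo (i : Fin 6) : testPoint i ∈ Ioo 0 1 := by
  fin_cases i <;> norm_num [testPoint]

lemma ψ_testPoint_sign_changes (i : Fin 5) :
    ψ (testPoint i.castSucc) * ψ (testPoint i.succ) < 0 := by
  have h₀ : 0 < ψ (testPoint 0) := by
    simp only [testPoint, Matrix.cons_val]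
    apply ψ_pos_of_bounds (a := 4999 / 5000) (b := 9999 / 10000) <;> norm_num [g]
  have h₁ : ψ (testPoint 1) < 0 := by
    simp only [testPoint, Matrix.cons_val]
    apply ψ_neg_of_bounds (a := 99999 / 100000) (b := 1) <;> norm_num [g]
  have h₂ : 0 < ψ (testPoint 2) := by
    simp only [testPoint, Matrix.cons_val]
    apply ψ_pos_of_bounds (a := 9997 / 10000) (b := 4999 / 5000) <;> norm_num [g]
  have h₃ : ψ (testPoint 3) < 0 := by
    simp only [testPoint, Matrix.cons_val]
    apply ψ_neg_of_bounds (a := 987 / 1000) (b := 247 / 250) <;> norm_num [g]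
  have h₄ : 0 < ψ (testPoint 4) := by
    simp only [testPoint, Matrix.cons_val]
    apply ψ_pos_of_bounds (a := 931 / 1000) (b := 233 / 250) <;> norm_num [g]
  have h₅ : ψ (testPoint 5) < 0 := by
    simp only [testPoint, Matrix.cons_val]
    apply ψ_neg_of_bounds (a := 913 / 1000) (b := 457 / 500) <;> norm_num [g]
  fin_cases i
  exacts [mul_neg_of_pos_of_neg h₀ h₁, mul_neg_of_neg_of_pos h₁ h₂, mul_neg_of_pos_of_neg h₂ h₃,
    mul_neg_of_neg_of_pos h₃ h₄, mul_neg_of_pos_of_neg h₄ h₅]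

end Haas

open Haas

/-- Haas' counterexample to Kushnirenko's conjecture: the pair
`f₁(x,y) = x¹⁰⁸ + 1.1 y⁵⁴ - 1.1 y`, `f₂(x,y) = y¹⁰⁸ + 1.1 x⁵⁴ - 1.1 x`
has at least `5` common roots in the open positive quadrant. -/
theorem stmt_6 :
    ∃ S : Finset (ℝ × ℝ), 5 ≤ S.card ∧ ∀ p ∈ S, 0 < p.1 ∧ 0 < p.2 ∧
      p.1 ^ (108 : ℕ) + 1.1 * p.2 ^ (54 : ℕ) - 1.1 * p.2 = 0 ∧
      p.2 ^ (108 : ℕ) + 1.1 * p.1 ^ (54 : ℕ) - 1.1 * p.1 = 0 := by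
  obtain ⟨c, hc_mono, hc⟩ := exists_strictMono_zeros_of_sign_changes continuous_ψ
    testPoint_strictMono ψ_testPoint_sign_changes
  refine ⟨Finset.univ.image fun i => (c i, φ (c i)), ?_, ?_⟩
  · rw [Finset.card_image_of_injective _ fun i j h => hc_mono.injective (congrArg Prod.fst h)]
    simp
  · simp only [Finset.mem_image, Finset.mem_univ, true_and, forall_exists_index]
    rintro _ i rfl
    obtain ⟨⟨hlo, hhi⟩, hzero⟩ := hc i
    exact commonRoot_of_ψ_eq_zero ((testPoint_mem_Ioo _).1.trans hlo)
      (hhi.trans (testPoint_mem_Ioo _).2) hzero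
end

section
/- Let F = (f_1,...,f_n) be a system of n real n-variate m_i-nomials (real exponents allowed) whose supports can all be translated into a single set of cardinality at most n+1 (i.e., there exist b_1,...,b_n in R^n and a set A of at most n+1 points in R^n with b_i + Supp(f_i) ⊆ A for all i). Then F has at most one isolated common root in the open positive orthant. -/
open Real Finset

private def dotp {n : ℕ} (α u : Fin n → ℝ) : ℝ := ∑ j, α j * u j

private noncomputable def Pm {n : ℕ} (x α : Fin n → ℝ) : ℝ := ∏ j, x j ^ α j

private lemma Pm_pos {n : ℕ} {x : Fin n → ℝ} (hx : ∀ j, 0 < x j) (α : Fin n → ℝ) :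
    0 < Pm x α :=
  Finset.prod_pos fun j _ => Real.rpow_pos_of_pos (hx j) _

private lemma Pm_eq_exp {n : ℕ} {x : Fin n → ℝ} (hx : ∀ j, 0 < x j) (α : Fin n → ℝ) :
    Pm x α = Real.exp (dotp α (fun j => Real.log (x j))) := by
  unfold Pm dotp
  rw [Real.exp_sum]
  exact Finset.prod_congr rfl fun j _ => by rw [Real.rpow_def_of_pos (hx j), mul_comm]

private lemma log_Pm {n : ℕ} {x : Fin n → ℝ} (hx : ∀ j, 0 < x j) (α : Fin n → ℝ) :
    Real.log (Pm x α) = dotp α (fun j => Real.log (x j)) := by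
  rw [Pm_eq_exp hx, Real.log_exp]

private lemma dotp_add_left {n : ℕ} (α β u : Fin n → ℝ) :
    dotp (α + β) u = dotp α u + dotp β u := by
  simp [dotp, add_mul, Finset.sum_add_distrib]

private lemma dotp_sub_left {n : ℕ} (α β u : Fin n → ℝ) :
    dotp (α - β) u = dotp α u - dotp β u := by
  simp [dotp, sub_mul, Finset.sum_sub_distrib]

private lemma dotp_add_right {n : ℕ} (α u v : Fin n → ℝ) :
    dotp α (u + v) = dotp α u + dotp α v := by
  simp [dotp, mul_add, Finset.sum_add_distrib]

private lemma dotp_smul_right {n : ℕ} (α : Fin n → ℝ) (t : ℝ) (u : Fin n → ℝ) :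
    dotp α (t • u) = t * dotp α u := by
  simp only [dotp, Pi.smul_apply, smul_eq_mul, Finset.mul_sum]
  exact Finset.sum_congr rfl fun j _ => by ring

private lemma Pm_add {n : ℕ} {x : Fin n → ℝ} (hx : ∀ j, 0 < x j) (α β : Fin n → ℝ) :
    Pm x (α + β) = Pm x α * Pm x β := by
  rw [Pm_eq_exp hx, Pm_eq_exp hx, Pm_eq_exp hx, dotp_add_left, Real.exp_add]

private lemma root_iff {n : ℕ} {m : Fin n → ℕ} (c : ∀ i, Fin (m i) → ℝ)
    (a : ∀ i, Fin (m i) → Fin n → ℝ) (b : Fin n → Fin n → ℝ) {x : Fin n → ℝ}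
    (hx : ∀ j, 0 < x j) (i : Fin n) :
    (∑ k, c i k * Pm x (b i + a i k)) = 0 ↔ (∑ k, c i k * Pm x (a i k)) = 0 := by
  have h : (∑ k, c i k * Pm x (b i + a i k)) = Pm x (b i) * ∑ k, c i k * Pm x (a i k) := by
    rw [Finset.mul_sum]
    exact Finset.sum_congr rfl fun k _ => by rw [Pm_add hx]; ring
  have h2 := (Pm_pos hx (b i)).ne'
  rw [h, mul_eq_zero]
  tauto

private lemma Pm_scale {n : ℕ} {x : Fin n → ℝ} (hx : ∀ j, 0 < x j) (t : ℝ) (u α : Fin n → ℝ) :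
    Pm (fun j => x j * Real.exp (t * u j)) α = Pm x α * Real.exp (t * dotp α u) := by
  unfold Pm dotp
  have h : ∀ j, (x j * Real.exp (t * u j)) ^ α j
      = x j ^ α j * Real.exp (t * (α j * u j)) := by
    intro j
    rw [Real.mul_rpow (hx j).le (Real.exp_pos _).le, ← Real.exp_mul]
    ring_nf
  simp only [h]
  rw [Finset.prod_mul_distrib, ← Real.exp_sum, ← Finset.mul_sum]

/-- The common zero set in the open positive orthant of the system
`fᵢ(x) = ∑ₖ c i k ∏ⱼ xⱼ^{a i k j}`. -/
def posZeros8 (n : ℕ) (m : Fin n → ℕ) (c : ∀ i, Fin (m i) → ℝ)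
    (a : ∀ i, Fin (m i) → Fin n → ℝ) : Set (Fin n → ℝ) :=
  {x : Fin n → ℝ | (∀ j, 0 < x j) ∧ ∀ i, (∑ k, c i k * ∏ j, x j ^ a i k j) = 0}

private lemma no_isolated {n : ℕ} (m : Fin n → ℕ) (c : ∀ i, Fin (m i) → ℝ)
    (a : ∀ i, Fin (m i) → Fin n → ℝ) (b : Fin n → Fin n → ℝ) (A : Finset (Fin n → ℝ))
    (hmem : ∀ i k, b i + a i k ∈ A) (u : Fin n → ℝ) (hune : u ≠ 0)
    (hu : ∀ α ∈ A, ∀ β ∈ A, dotp α u = dotp β u)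
    (x : Fin n → ℝ) (hxpos : ∀ j, 0 < x j)
    (hxroot : ∀ i, (∑ k, c i k * ∏ j, x j ^ a i k j) = 0)
    (ε : ℝ) (hε : 0 < ε)
    (hiso : ∀ y ∈ posZeros8 n m c a, dist y x < ε → y = x) : False := by
  set G : ℝ → Fin n → ℝ := fun t j => x j * Real.exp (t * u j) with hG
  have hGpos : ∀ t j, 0 < G t j := fun t j => mul_pos (hxpos j) (Real.exp_pos _)
  have hGroot : ∀ t, G t ∈ posZeros8 n m c a := by
    intro t
    refine ⟨hGpos t, fun i => ?_⟩
    have hxr : (∑ k, c i k * Pm x (a i k)) = 0 := hxroot i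
    show (∑ k, c i k * Pm (G t) (a i k)) = 0
    rcases isEmpty_or_nonempty (Fin (m i)) with he | hne
    · simp
    · set k0 : Fin (m i) := Classical.arbitrary _ with hk0
      have hconst : ∀ k, dotp (a i k) u = dotp (a i k0) u := by
        intro k
        have := hu _ (hmem i k) _ (hmem i k0)
        rw [dotp_add_left, dotp_add_left] at this
        linarith
      have : ∀ k : Fin (m i), c i k * Pm (G t) (a i k)
          = Real.exp (t * dotp (a i k0) u) * (c i k * Pm x (a i k)) := by
        intro k
        rw [hG, Pm_scale hxpos, hconst k]
        ring
      rw [Finset.sum_congr rfl fun k _ => this k, ← Finset.mul_sum, hxr, mul_zero]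
  obtain ⟨j0, hj0⟩ : ∃ j, u j ≠ 0 := Function.ne_iff.mp hune
  have hGne : ∀ t : ℝ, t ≠ 0 → G t ≠ x := by
    intro t ht heq
    have h1 : x j0 * Real.exp (t * u j0) = x j0 := congrFun heq j0
    have h2 : Real.exp (t * u j0) = Real.exp 0 := by
      rw [Real.exp_zero]
      exact mul_left_cancel₀ (hxpos j0).ne' (by rw [h1, mul_one])
    exact (mul_ne_zero ht hj0) (Real.exp_injective h2)
  have hcont : Continuous G := by
    apply continuous_pi
    intro j
    exact continuous_const.mul (Real.continuous_exp.comp (continuous_id.mul continuous_const))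
  have hG0 : G 0 = x := by funext j; simp [hG]
  have htend : Filter.Tendsto G (nhdsWithin 0 {(0:ℝ)}ᶜ) (nhds x) := by
    rw [← hG0]
    exact (hcont.tendsto 0).mono_left nhdsWithin_le_nhds
  have hev : ∀ᶠ t in nhdsWithin 0 {(0:ℝ)}ᶜ, dist (G t) x < ε :=
    htend (Metric.ball_mem_nhds x hε)
  have hev2 : ∀ᶠ t in nhdsWithin 0 {(0:ℝ)}ᶜ, (t : ℝ) ≠ 0 :=
    eventually_mem_nhdsWithin
  obtain ⟨t, htd, htne⟩ := (hev.and hev2).exists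
  exact hGne t htne (hiso (G t) (hGroot t) htd)

private lemma connect {n : ℕ} (hn : 0 < n) {m : Fin n → ℕ} (c : ∀ i, Fin (m i) → ℝ)
    (a : ∀ i, Fin (m i) → Fin n → ℝ) (b : Fin n → Fin n → ℝ) (A : Finset (Fin n → ℝ))
    (hAcard : A.card ≤ n + 1) (hmem : ∀ i k, b i + a i k ∈ A)
    (hΦ : ∀ u : Fin n → ℝ, (∀ α ∈ A, ∀ β ∈ A, dotp α u = dotp β u) → u = 0)
    {x y : Fin n → ℝ} (hxpos : ∀ j, 0 < x j)
    (hxroot : ∀ i, (∑ k, c i k * ∏ j, x j ^ a i k j) = 0)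
    (hypos : ∀ j, 0 < y j)
    (hyroot : ∀ i, (∑ k, c i k * ∏ j, y j ^ a i k j) = 0)
    (ε : ℝ) (hε : 0 < ε)
    (hiso : ∀ z ∈ posZeros8 n m c a, dist z x < ε → z = x) : y = x := by
  classical
  -- A is nonempty
  have hAne : A.Nonempty := by
    by_contra hA
    rw [Finset.not_nonempty_iff_eq_empty] at hA
    have h0 : (Pi.single ⟨0, hn⟩ (1:ℝ) : Fin n → ℝ) = 0 := by
      apply hΦ
      simp [hA]
    have := congrFun h0 ⟨0, hn⟩
    simp at this
  obtain ⟨α₀, hα₀⟩ := hAne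
  -- every element of A: α₀ or in the erase
  have hAsplit : ∀ α ∈ A, α = α₀ ∨ α ∈ A.erase α₀ := by
    intro α hα
    by_cases h : α = α₀
    · exact Or.inl h
    · exact Or.inr (Finset.mem_erase.mpr ⟨h, hα⟩)
  -- zero test
  have hzero : ∀ u : Fin n → ℝ, (∀ α ∈ A.erase α₀, dotp (α - α₀) u = 0) → u = 0 := by
    intro u hu
    apply hΦ
    have h1 : ∀ α ∈ A, dotp α u = dotp α₀ u := by
      intro α hα
      rcases hAsplit α hα with rfl | h
      · rfl
      · have := hu α h
        rw [dotp_sub_left] at this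
        linarith
    intro α hα β hβ
    rw [h1 α hα, h1 β hβ]
  -- the full comparison map, used for the cardinality bound
  have hcard : (A.erase α₀).card = n := by
    have hle : (A.erase α₀).card ≤ n := by
      rw [Finset.card_erase_of_mem hα₀]
      omega
    set Φ : (Fin n → ℝ) →ₗ[ℝ] ({α // α ∈ A.erase α₀} → ℝ) :=
      { toFun := fun u => fun α => dotp ((α : Fin n → ℝ) - α₀) u
        map_add' := fun u v => by funext α; simp [dotp_add_right]
        map_smul' := fun t u => by funext α; simp [dotp_smul_right] } with hΦdef
    have hker : ∀ u, Φ u = 0 → u = 0 := by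
      intro u h
      exact hzero u fun α hα => congrFun h ⟨α, hα⟩
    have hinj : Function.Injective Φ := by
      intro u v huv
      have := hker (u - v) (by rw [map_sub, huv, sub_self])
      exact sub_eq_zero.mp this
    have hge := LinearMap.finrank_le_finrank_of_injective hinj
    rw [Module.finrank_fintype_fun_eq_card, Module.finrank_fintype_fun_eq_card,
      Fintype.card_fin, Fintype.card_coe] at hge
    omega
  -- an enumeration of A.erase α₀ by Fin n
  set ι : Fin n ≃ {α // α ∈ A.erase α₀} :=
    (Fintype.equivFinOfCardEq (by rw [Fintype.card_coe, hcard])).symm with hιdef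
  -- the square comparison map
  set Ψ : (Fin n → ℝ) →ₗ[ℝ] (Fin n → ℝ) :=
    { toFun := fun u => fun i => dotp (((ι i : {α // α ∈ A.erase α₀}) : Fin n → ℝ) - α₀) u
      map_add' := fun u v => by funext i; simp [dotp_add_right]
      map_smul' := fun t u => by funext i; simp [dotp_smul_right] } with hΨdef
  have hΨapp : ∀ u i, Ψ u i = dotp (((ι i : {α // α ∈ A.erase α₀}) : Fin n → ℝ) - α₀) u :=
    fun u i => rfl
  have hΨinj : Function.Injective Ψ := by
    have hker : ∀ u, Ψ u = 0 → u = 0 := by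
      intro u h
      apply hzero
      intro α hα
      have := congrFun h (ι.symm ⟨α, hα⟩)
      rwa [hΨapp, Equiv.apply_symm_apply] at this
    intro u v huv
    exact sub_eq_zero.mp (hker (u - v) (by rw [map_sub, huv, sub_self]))
  have hΨsurj : Function.Surjective Ψ := LinearMap.injective_iff_surjective.mp hΨinj
  set ψ : (Fin n → ℝ) ≃ₗ[ℝ] (Fin n → ℝ) := LinearEquiv.ofBijective Ψ ⟨hΨinj, hΨsurj⟩ with hψdef
  have hψapp : ∀ u, ψ u = Ψ u := fun u => rfl
  -- the segment between the two monomial-value vectors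
  set r : ℝ → (Fin n → ℝ) → ℝ := fun s α => (1 - s) * Pm x α + s * Pm y α with hrdef
  have hrpos : ∀ s ∈ Set.Icc (0:ℝ) 1, ∀ α, 0 < r s α := by
    intro s hs α
    rcases eq_or_lt_of_le hs.1 with h | h
    · simp only [hrdef, ← h]
      simpa using Pm_pos hxpos α
    · exact add_pos_of_nonneg_of_pos
        (mul_nonneg (by linarith [hs.2]) (Pm_pos hxpos α).le)
        (mul_pos h (Pm_pos hypos α))
  -- the implicit path of roots
  set v : ℝ → Fin n → ℝ := fun s i =>
    Real.log (r s (((ι i : {α // α ∈ A.erase α₀}) : Fin n → ℝ))) - Real.log (r s α₀) with hvdef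
  set w : ℝ → Fin n → ℝ := fun s => ψ.symm (v s) with hwdef
  set z : ℝ → Fin n → ℝ := fun s j => Real.exp (w s j) with hzdef
  have hzpos : ∀ s j, 0 < z s j := fun s j => Real.exp_pos _
  have hΨw : ∀ s, Ψ (w s) = v s := by
    intro s
    rw [hwdef]
    exact ψ.apply_symm_apply (v s)
  -- the key identity
  have hkey : ∀ s ∈ Set.Icc (0:ℝ) 1, ∀ α ∈ A,
      Pm (z s) α = Real.exp (dotp α₀ (w s)) / r s α₀ * r s α := by
    intro s hs α hα
    have hlog : ∀ j, Real.log (z s j) = w s j := fun j => Real.log_exp _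
    have h1 : Pm (z s) α = Real.exp (dotp α (w s)) := by
      rw [Pm_eq_exp (hzpos s) α]
      congr 1
      unfold dotp
      refine Finset.sum_congr rfl fun j _ => ?_
      show α j * Real.log (z s j) = α j * w s j
      rw [hlog j]
    have h2 : dotp α (w s) = dotp α₀ (w s) + dotp (α - α₀) (w s) := by
      rw [dotp_sub_left]; ring
    rcases hAsplit α hα with rfl | hmem'
    · rw [h1, h2, sub_self]
      have : dotp (0 : Fin n → ℝ) (w s) = 0 := by simp [dotp]
      rw [this, add_zero, div_mul_cancel₀]
      exact (hrpos s hs α).ne'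
    · have h3 : dotp (α - α₀) (w s) = v s (ι.symm ⟨α, hmem'⟩) := by
        have := congrFun (hΨw s) (ι.symm ⟨α, hmem'⟩)
        rw [hΨapp, Equiv.apply_symm_apply] at this
        simpa using this
      have h4 : v s (ι.symm ⟨α, hmem'⟩) = Real.log (r s α) - Real.log (r s α₀) := by
        rw [hvdef]
        simp only [Equiv.apply_symm_apply]
      rw [h1, h2, h3, h4, Real.exp_add, Real.exp_sub,
        Real.exp_log (hrpos s hs α), Real.exp_log (hrpos s hs α₀)]
      ring
  -- every point of the path is a root
  have hzroot : ∀ s ∈ Set.Icc (0:ℝ) 1, z s ∈ posZeros8 n m c a := by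
    intro s hs
    refine ⟨hzpos s, fun i => ?_⟩
    show (∑ k, c i k * Pm (z s) (a i k)) = 0
    rw [← root_iff c a b (hzpos s) i]
    have hx' : (∑ k, c i k * Pm x (b i + a i k)) = 0 :=
      (root_iff c a b hxpos i).mpr (hxroot i)
    have hy' : (∑ k, c i k * Pm y (b i + a i k)) = 0 :=
      (root_iff c a b hypos i).mpr (hyroot i)
    have hterm : ∀ k : Fin (m i), c i k * Pm (z s) (b i + a i k)
        = Real.exp (dotp α₀ (w s)) / r s α₀ * (c i k * r s (b i + a i k)) := by
      intro k
      rw [hkey s hs _ (hmem i k)]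
      ring
    rw [Finset.sum_congr rfl fun k _ => hterm k, ← Finset.mul_sum]
    have : (∑ k, c i k * r s (b i + a i k))
        = (1 - s) * (∑ k, c i k * Pm x (b i + a i k))
          + s * (∑ k, c i k * Pm y (b i + a i k)) := by
      rw [Finset.mul_sum, Finset.mul_sum, ← Finset.sum_add_distrib]
      exact Finset.sum_congr rfl fun k _ => by rw [hrdef]; ring
    rw [this, hx', hy', mul_zero, mul_zero, add_zero, mul_zero]
  -- endpoints
  have hlogx : ∀ α : Fin n → ℝ, Real.log (Pm x α) = dotp α (fun j => Real.log (x j)) :=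
    log_Pm hxpos
  have hz0 : z 0 = x := by
    have hr0 : ∀ α, r 0 α = Pm x α := by intro α; rw [hrdef]; ring
    have hv0 : v 0 = Ψ (fun j => Real.log (x j)) := by
      funext i
      rw [hvdef]
      simp only [hr0, hΨapp]
      rw [hlogx, hlogx, dotp_sub_left]
    have hw0 : w 0 = fun j => Real.log (x j) := by
      rw [hwdef]
      show ψ.symm (v 0) = _
      rw [hv0, ← hψapp]
      exact ψ.symm_apply_apply _
    funext j
    rw [hzdef]
    simp only [hw0]
    exact Real.exp_log (hxpos j)
  have hlogy : ∀ α : Fin n → ℝ, Real.log (Pm y α) = dotp α (fun j => Real.log (y j)) :=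
    log_Pm hypos
  have hz1 : z 1 = y := by
    have hr1 : ∀ α, r 1 α = Pm y α := by intro α; rw [hrdef]; ring
    have hv1 : v 1 = Ψ (fun j => Real.log (y j)) := by
      funext i
      rw [hvdef]
      simp only [hr1, hΨapp]
      rw [hlogy, hlogy, dotp_sub_left]
    have hw1 : w 1 = fun j => Real.log (y j) := by
      rw [hwdef]
      show ψ.symm (v 1) = _
      rw [hv1, ← hψapp]
      exact ψ.symm_apply_apply _
    funext j
    rw [hzdef]
    simp only [hw1]
    exact Real.exp_log (hypos j)
  -- continuity of the path
  have hrc : ∀ α : Fin n → ℝ, Continuous (fun s => r s α) := by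
    intro α
    rw [hrdef]
    fun_prop
  have hvc : ContinuousOn v (Set.Icc (0:ℝ) 1) := by
    rw [continuousOn_pi]
    intro i
    apply ContinuousOn.sub
    · exact ContinuousOn.log ((hrc _).continuousOn) fun s hs => (hrpos s hs _).ne'
    · exact ContinuousOn.log ((hrc _).continuousOn) fun s hs => (hrpos s hs _).ne'
  have hwc : ContinuousOn w (Set.Icc (0:ℝ) 1) := by
    have hψc : Continuous (ψ.symm : (Fin n → ℝ) → (Fin n → ℝ)) :=
      LinearMap.continuous_of_finiteDimensional (ψ.symm : (Fin n → ℝ) →ₗ[ℝ] (Fin n → ℝ))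
    exact hψc.comp_continuousOn hvc
  have hzc : ContinuousOn z (Set.Icc (0:ℝ) 1) := by
    rw [continuousOn_pi]
    intro j
    exact Real.continuous_exp.comp_continuousOn ((continuous_apply j).comp_continuousOn hwc)
  -- connectedness argument via the supremum
  set T : Set ℝ := Set.Icc (0:ℝ) 1 ∩ z ⁻¹' {x} with hTdef
  have hTclosed : IsClosed T :=
    hzc.preimage_isClosed_of_isClosed isClosed_Icc isClosed_singleton
  have hTne : T.Nonempty := ⟨0, ⟨Set.mem_Icc.mpr ⟨le_refl 0, zero_le_one⟩, by simp [hz0]⟩⟩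
  have hTbdd : BddAbove T := (bddAbove_Icc).mono Set.inter_subset_left
  set s₀ : ℝ := sSup T with hs₀def
  have hs₀T : s₀ ∈ T := hTclosed.csSup_mem hTne hTbdd
  have hs₀Icc : s₀ ∈ Set.Icc (0:ℝ) 1 := hs₀T.1
  have hzs₀ : z s₀ = x := hs₀T.2
  rcases eq_or_lt_of_le hs₀Icc.2 with h1 | h1
  · rw [← hz1, ← h1, hzs₀]
  · exfalso
    have hcw : ContinuousWithinAt z (Set.Icc (0:ℝ) 1) s₀ := hzc s₀ hs₀Icc
    rw [Metric.continuousWithinAt_iff] at hcw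
    obtain ⟨δ, hδ, hδ'⟩ := hcw ε hε
    set s₁ : ℝ := min (s₀ + δ / 2) 1 with hs₁def
    have hs₁Icc : s₁ ∈ Set.Icc (0:ℝ) 1 :=
      ⟨le_min (by linarith [hs₀Icc.1]) zero_le_one, min_le_right _ _⟩
    have hs₀s₁ : s₀ < s₁ := lt_min (by linarith) h1
    have hdist : dist s₁ s₀ < δ := by
      rw [Real.dist_eq, abs_of_nonneg (by linarith)]
      have := min_le_left (s₀ + δ / 2) 1
      linarith
    have hnear : dist (z s₁) x < ε := by
      have := hδ' hs₁Icc hdist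
      rwa [hzs₀] at this
    have : z s₁ = x := hiso (z s₁) (hzroot s₁ hs₁Icc) hnear
    have hs₁T : s₁ ∈ T := ⟨hs₁Icc, this⟩
    have : s₁ ≤ s₀ := le_csSup hTbdd hs₁T
    linarith

/-- If the supports of an `n × n` fewnomial system can all be translated into a single
set of at most `n+1` exponent vectors, then the system has at most one isolated common
root in the open positive orthant. -/
theorem stmt_8 (n : ℕ) (m : Fin n → ℕ) (c : ∀ i, Fin (m i) → ℝ)
    (a : ∀ i, Fin (m i) → Fin n → ℝ)
    (hc : ∀ i k, c i k ≠ 0) (hinj : ∀ i, Function.Injective (a i))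
    (htrans : ∃ (b : Fin n → Fin n → ℝ) (A : Finset (Fin n → ℝ)), A.card ≤ n + 1 ∧
      ∀ i k, b i + a i k ∈ A) :
    {x ∈ posZeros8 n m c a |
      ∃ ε > 0, ∀ y ∈ posZeros8 n m c a, dist y x < ε → y = x}.Subsingleton := by
  intro x hx y hy
  rcases Nat.eq_zero_or_pos n with hn | hn
  · exact funext fun j => absurd j.isLt (by omega)
  obtain ⟨b, A, hAcard, hmem⟩ := htrans
  obtain ⟨⟨hxpos, hxroot⟩, ε, hε, hiso⟩ := hx
  obtain ⟨⟨hypos, hyroot⟩, ε', hε', hiso'⟩ := hy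
  by_cases hΦ : ∀ u : Fin n → ℝ, (∀ α ∈ A, ∀ β ∈ A, dotp α u = dotp β u) → u = 0
  · exact connect hn c a b A hAcard hmem hΦ hypos hyroot hxpos hxroot ε' hε' hiso'
  · push_neg at hΦ
    obtain ⟨u, hu, hune⟩ := hΦ
    exact (no_isolated m c a b A hmem u hune hu x hxpos hxroot ε hε hiso).elim
end

section
/- Let f(x) = p(x^{a_1},...,x^{a_m}) where p is a real polynomial in m variables and a_1,...,a_m in R^2. Then the cubic-in-derivatives expression ∂₁²f·(∂₂f)² − 2∂₁∂₂f·∂₁f·∂₂f + ∂₂²f·(∂₁f)² equals, up to multiplication by a monomial in (x_1,x_2), a polynomial q(x^{a_1},...,x^{a_m}) where q has Newton polytope contained in 3·Newt(p). -/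
open scoped Pointwise

/-- `F13 p a x y = p(x^{a₁}, …, x^{a_m})` for exponent vectors `aₖ ∈ ℝ²`. -/
noncomputable def F13 {m : ℕ} (p : MvPolynomial (Fin m) ℝ) (a : Fin m → Fin 2 → ℝ)
    (x y : ℝ) : ℝ :=
  MvPolynomial.eval (fun k => x ^ a k 0 * y ^ a k 1) p

/-- The (real points of the) Newton polytope of a polynomial in `m` variables. -/
def NewtMv {m : ℕ} (p : MvPolynomial (Fin m) ℝ) : Set (Fin m → ℝ) :=
  convexHull ℝ {v : Fin m → ℝ | ∃ d ∈ p.support, v = fun k => (d k : ℝ)}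

/-!
Substituting `X k ↦ x ^ a k 0 * y ^ a k 1` turns `x ∂ₓ` and `y ∂_y` into the Euler derivations
`θᵢ = ∑ₖ a k i • X k ∂ₖ`, which act diagonally on monomials (`θᵢ X^d = (∑ₖ d k * a k i) X^d`) and
hence preserve supports. So `∂ₓf`, `∂_y f` are `x⁻¹`, `y⁻¹` times `θ₀p`, `θ₁p` evaluated at the
monomials, the second derivatives are `x⁻²`, `(x y)⁻¹`, `y⁻²` times `θ₀²p - θ₀p`, `θ₀θ₁p`,
`θ₁²p - θ₁p`, and the whole expression is `x⁻² y⁻²` times a sum of triple products of polynomials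
supported in `supp p`. Its support therefore lies in `supp p + supp p + supp p ⊆ 3 • Newt(p)`.
-/

open MvPolynomial

namespace MvPolynomial

section Euler

variable {σ R : Type*} [CommSemiring R]

noncomputable def eulerDerivation (b : σ → R) :
    Derivation R (MvPolynomial σ R) (MvPolynomial σ R) :=
  mkDerivation R fun i => b i • X i

theorem eulerDerivation_X (b : σ → R) (i : σ) : eulerDerivation b (X i) = b i • X i :=
  mkDerivation_X R _ i

theorem eulerDerivation_monomial (b : σ → R) (s : σ →₀ ℕ) (r : R) :
    eulerDerivation b (monomial s r) = Finsupp.weight b s • monomial s r := by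
  rw [eulerDerivation, mkDerivation_monomial, Finsupp.weight_apply, Finsupp.sum, Finsupp.sum,
    Finset.smul_sum, Finset.sum_smul]
  refine Finset.sum_congr rfl fun i _ => ?_
  have h := X_mul_pderiv_monomial (i := i) (m := s) (r := r)
  rw [pderiv_monomial, ← C_mul_monomial] at h
  simp only [smul_eq_C_mul, nsmul_eq_mul, map_mul, map_natCast] at h ⊢
  rw [mul_comm (s i : MvPolynomial σ R), mul_assoc, ← h]
  ring

theorem coeff_eulerDerivation (b : σ → R) (p : MvPolynomial σ R) (s : σ →₀ ℕ) :
    coeff s (eulerDerivation b p) = Finsupp.weight b s * coeff s p := by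
  induction p using induction_on' with
  | monomial t r =>
    classical
    rw [eulerDerivation_monomial, coeff_smul, coeff_monomial, smul_eq_mul]
    split_ifs with h
    · rw [h]
    · simp
  | add p q hp hq => rw [map_add, coeff_add, coeff_add, hp, hq, mul_add]

theorem eulerDerivation_mem_restrictSupport (b : σ → R) {s : Set (σ →₀ ℕ)}
    {p : MvPolynomial σ R} (hp : p ∈ restrictSupport R s) :
    eulerDerivation b p ∈ restrictSupport R s := by
  rw [mem_restrictSupport_iff] at hp ⊢
  refine subset_trans (fun d hd => ?_) hp
  rw [Finset.mem_coe, mem_support_iff, coeff_eulerDerivation] at hd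
  exact mem_support_iff.2 (right_ne_zero_of_mul hd)

end Euler

theorem mul_mem_restrictSupport {σ R : Type*} [CommSemiring R] {s t : Set (σ →₀ ℕ)}
    {p q : MvPolynomial σ R} (hp : p ∈ restrictSupport R s) (hq : q ∈ restrictSupport R t) :
    p * q ∈ restrictSupport R (s + t) := by
  classical
  rw [mem_restrictSupport_iff] at hp hq ⊢
  refine (Finset.coe_subset.2 (support_mul p q)).trans ?_
  rw [Finset.coe_add]
  exact Set.add_subset_add hp hq

end MvPolynomial

theorem Convex.add_add_self_eq_three_smul {E : Type*} [AddCommGroup E] [Module ℝ E] {s : Set E}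
    (hs : Convex ℝ s) : s + s + s = (3 : ℝ) • s := by
  rw [show (3 : ℝ) = 1 + 1 + 1 by norm_num, hs.add_smul (by norm_num) zero_le_one,
    hs.add_smul zero_le_one zero_le_one, one_smul]

theorem NewtMv_subset_three_smul {m : ℕ} {p q : MvPolynomial (Fin m) ℝ}
    (hq : q ∈ restrictSupport ℝ (↑p.support + ↑p.support + ↑p.support)) :
    NewtMv q ⊆ (3 : ℝ) • NewtMv p := by
  have hconvex : Convex ℝ (NewtMv p) := convex_convexHull ℝ _
  refine convexHull_min ?_ (hconvex.smul 3)
  rintro _ ⟨d, hd, rfl⟩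
  rw [mem_restrictSupport_iff] at hq
  obtain ⟨_, ⟨d₁, hd₁, d₂, hd₂, rfl⟩, d₃, hd₃, rfl⟩ := hq hd
  have hvertex : ∀ e ∈ p.support, (fun k => (e k : ℝ)) ∈ NewtMv p :=
    fun e he => subset_convexHull ℝ _ ⟨e, he, rfl⟩
  rw [← hconvex.add_add_self_eq_three_smul]
  convert Set.add_mem_add (Set.add_mem_add (hvertex d₁ hd₁) (hvertex d₂ hd₂)) (hvertex d₃ hd₃)
    using 1
  ext k
  simp

theorem Real.hasDerivAt_rpow_const_of_pos {x : ℝ} (hx : 0 < x) (α : ℝ) :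
    HasDerivAt (fun t => t ^ α) (x⁻¹ * (α * x ^ α)) x := by
  convert Real.hasDerivAt_rpow_const (p := α) (Or.inl hx.ne') using 1
  rw [Real.rpow_sub_one hx.ne']
  field_simp

namespace MvPolynomial

variable {σ : Type*}

theorem hasDerivAt_eval_eulerDerivation {u : σ → ℝ → ℝ} {b : σ → ℝ} {g t : ℝ}
    (hu : ∀ k, HasDerivAt (u k) (g * (b k * u k t)) t) (p : MvPolynomial σ ℝ) :
    HasDerivAt (fun s => eval (fun k => u k s) p)
      (g * eval (fun k => u k t) (eulerDerivation b p)) t := by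
  induction p using induction_on with
  | C r =>
    rw [← algebraMap_eq, Derivation.map_algebraMap, map_zero, mul_zero]
    simpa using hasDerivAt_const t r
  | add p q hp hq =>
    simp only [map_add, mul_add]
    exact hp.add hq
  | mul_X p k hp =>
    simp only [map_mul, eval_X]
    refine (hp.mul (hu k)).congr_deriv ?_
    simp only [Derivation.leibniz, eulerDerivation_X, smul_eq_mul, map_add, map_mul, eval_X,
      smul_eval]
    ring

variable (a : σ → Fin 2 → ℝ) (q : MvPolynomial σ ℝ)

theorem hasDerivAt_eval_rpow_fst {x : ℝ} (hx : 0 < x) (y : ℝ) :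
    HasDerivAt (fun x' => eval (fun k => x' ^ a k 0 * y ^ a k 1) q)
      (x⁻¹ * eval (fun k => x ^ a k 0 * y ^ a k 1) (eulerDerivation (fun k => a k 0) q)) x :=
  hasDerivAt_eval_eulerDerivation (fun k => by
    simpa only [mul_assoc] using (Real.hasDerivAt_rpow_const_of_pos hx (a k 0)).mul_const _) q

theorem hasDerivAt_eval_rpow_snd (x : ℝ) {y : ℝ} (hy : 0 < y) :
    HasDerivAt (fun y' => eval (fun k => x ^ a k 0 * y' ^ a k 1) q)
      (y⁻¹ * eval (fun k => x ^ a k 0 * y ^ a k 1) (eulerDerivation (fun k => a k 1) q)) y :=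
  hasDerivAt_eval_eulerDerivation (fun k => by
    refine ((Real.hasDerivAt_rpow_const_of_pos hy (a k 1)).const_mul (x ^ a k 0)).congr_deriv ?_
    ring) q

theorem deriv_deriv_eval_rpow_fst {x : ℝ} (hx : 0 < x) (y : ℝ) :
    deriv (fun x' => deriv (fun x'' => eval (fun k => x'' ^ a k 0 * y ^ a k 1) q) x') x =
      (x ^ 2)⁻¹ * eval (fun k => x ^ a k 0 * y ^ a k 1)
        (eulerDerivation (fun k => a k 0) (eulerDerivation (fun k => a k 0) q)
          - eulerDerivation (fun k => a k 0) q) := by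
  have hfirst : (fun x' => deriv (fun x'' => eval (fun k => x'' ^ a k 0 * y ^ a k 1) q) x')
      =ᶠ[nhds x] fun x' => x'⁻¹ *
        eval (fun k => x' ^ a k 0 * y ^ a k 1) (eulerDerivation (fun k => a k 0) q) := by
    filter_upwards [Ioi_mem_nhds hx] with x' hx' using (hasDerivAt_eval_rpow_fst a q hx' y).deriv
  rw [hfirst.deriv_eq]
  refine ((hasDerivAt_inv hx.ne').mul (hasDerivAt_eval_rpow_fst a _ hx y)).deriv.trans ?_
  rw [map_sub]
  ring

theorem deriv_deriv_eval_rpow_snd (x : ℝ) {y : ℝ} (hy : 0 < y) :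
    deriv (fun y' => deriv (fun y'' => eval (fun k => x ^ a k 0 * y'' ^ a k 1) q) y') y =
      (y ^ 2)⁻¹ * eval (fun k => x ^ a k 0 * y ^ a k 1)
        (eulerDerivation (fun k => a k 1) (eulerDerivation (fun k => a k 1) q)
          - eulerDerivation (fun k => a k 1) q) := by
  have hfirst : (fun y' => deriv (fun y'' => eval (fun k => x ^ a k 0 * y'' ^ a k 1) q) y')
      =ᶠ[nhds y] fun y' => y'⁻¹ *
        eval (fun k => x ^ a k 0 * y' ^ a k 1) (eulerDerivation (fun k => a k 1) q) := by
    filter_upwards [Ioi_mem_nhds hy] with y' hy' using (hasDerivAt_eval_rpow_snd a q x hy').deriv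
  rw [hfirst.deriv_eq]
  refine ((hasDerivAt_inv hy.ne').mul (hasDerivAt_eval_rpow_snd a _ x hy)).deriv.trans ?_
  rw [map_sub]
  ring

theorem deriv_deriv_eval_rpow_snd_fst {x y : ℝ} (hx : 0 < x) (hy : 0 < y) :
    deriv (fun x' => deriv (fun y' => eval (fun k => x' ^ a k 0 * y' ^ a k 1) q) y) x =
      (x * y)⁻¹ * eval (fun k => x ^ a k 0 * y ^ a k 1)
        (eulerDerivation (fun k => a k 0) (eulerDerivation (fun k => a k 1) q)) := by
  have hfirst : (fun x' => deriv (fun y' => eval (fun k => x' ^ a k 0 * y' ^ a k 1) q) y) =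
      fun x' => y⁻¹ *
        eval (fun k => x' ^ a k 0 * y ^ a k 1) (eulerDerivation (fun k => a k 1) q) := by
    funext x'
    exact (hasDerivAt_eval_rpow_snd a q x' hy).deriv
  rw [hfirst, ((hasDerivAt_eval_rpow_fst a _ hx y).const_mul y⁻¹).deriv, mul_inv]
  ring

end MvPolynomial

/-- For `f(x) = p(x^{a₁},…,x^{a_m})`, the expression
`∂₁²f·(∂₂f)² − 2 ∂₁∂₂f·∂₁f·∂₂f + ∂₂²f·(∂₁f)²` equals, up to a monomial factor in
`(x₁,x₂)`, a polynomial `q(x^{a₁},…,x^{a_m})` with `Newt(q) ⊆ 3·Newt(p)`. -/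
theorem stmt_13 (m : ℕ) (p : MvPolynomial (Fin m) ℝ) (a : Fin m → Fin 2 → ℝ) :
    ∃ (q : MvPolynomial (Fin m) ℝ) (w : Fin 2 → ℝ),
      NewtMv q ⊆ (3 : ℝ) • NewtMv p ∧
      ∀ x y : ℝ, 0 < x → 0 < y →
        deriv (fun x' => deriv (fun x'' => F13 p a x'' y) x') x *
            (deriv (fun y' => F13 p a x y') y) ^ 2
          - 2 * deriv (fun x' => deriv (fun y' => F13 p a x' y') y) x *
              deriv (fun x' => F13 p a x' y) x * deriv (fun y' => F13 p a x y') y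
          + deriv (fun y' => deriv (fun y'' => F13 p a x y'') y') y *
              (deriv (fun x' => F13 p a x' y) x) ^ 2 =
        x ^ w 0 * y ^ w 1 * MvPolynomial.eval (fun k => x ^ a k 0 * y ^ a k 1) q := by
  set θ₀ := eulerDerivation (fun k => a k 0)
  set θ₁ := eulerDerivation (fun k => a k 1)
  set S : Set (Fin m →₀ ℕ) := ↑p.support
  have hp : p ∈ restrictSupport ℝ S := (mem_restrictSupport_iff ℝ).2 subset_rfl
  have htriple : ∀ {q₁ q₂ q₃}, q₁ ∈ restrictSupport ℝ S → q₂ ∈ restrictSupport ℝ S →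
      q₃ ∈ restrictSupport ℝ S → q₁ * q₂ * q₃ ∈ restrictSupport ℝ (S + S + S) :=
    fun h₁ h₂ h₃ => mul_mem_restrictSupport (mul_mem_restrictSupport h₁ h₂) h₃
  refine ⟨(θ₀ (θ₀ p) - θ₀ p) * θ₁ p * θ₁ p - (2 : ℝ) • (θ₀ (θ₁ p) * θ₀ p * θ₁ p)
      + (θ₁ (θ₁ p) - θ₁ p) * θ₀ p * θ₀ p, fun _ => -2, NewtMv_subset_three_smul ?_, ?_⟩
  · have h₀ : θ₀ p ∈ restrictSupport ℝ S := eulerDerivation_mem_restrictSupport _ hp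
    have h₁ : θ₁ p ∈ restrictSupport ℝ S := eulerDerivation_mem_restrictSupport _ hp
    have h₀₀ : θ₀ (θ₀ p) ∈ restrictSupport ℝ S := eulerDerivation_mem_restrictSupport _ h₀
    have h₀₁ : θ₀ (θ₁ p) ∈ restrictSupport ℝ S := eulerDerivation_mem_restrictSupport _ h₁
    have h₁₁ : θ₁ (θ₁ p) ∈ restrictSupport ℝ S := eulerDerivation_mem_restrictSupport _ h₁
    exact add_mem (sub_mem (htriple (sub_mem h₀₀ h₀) h₁ h₁)
      (Submodule.smul_mem _ _ (htriple h₀₁ h₀ h₁))) (htriple (sub_mem h₁₁ h₁) h₀ h₀)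
  · intro x y hx hy
    simp only [F13]
    rw [deriv_deriv_eval_rpow_fst a p hx, deriv_deriv_eval_rpow_snd a p x hy,
      deriv_deriv_eval_rpow_snd_fst a p hx hy, (hasDerivAt_eval_rpow_fst a p hx y).deriv,
      (hasDerivAt_eval_rpow_snd a p x hy).deriv, Real.rpow_neg hx.le, Real.rpow_neg hy.le,
      Real.rpow_two, Real.rpow_two]
    simp only [map_add, map_sub, map_mul, smul_eval]
    ring
end

section
/- Given any n-dimensional convex compact polytope P in R^n with vertex set V, the map ψ_P from the open positive orthant R^n_+ to the interior of P defined by ψ_P(x) = (sum_{p in V} p·x^p) / (sum_{q in V} x^q) is a real analytic diffeomorphism from R^n_+ onto the interior of P. -/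
/-!
Substituting `x = exp z` turns `ψ_P` into the gradient `Φ` of the convex function
`L(z) = log ∑_{p ∈ V} exp (p ⬝ᵥ z)`. Along a line `z + t d`, the derivative of `Φ(z + t d) ⬝ᵥ d`
is the variance of `p ⬝ᵥ d` under the Gibbs weights `exp (p ⬝ᵥ (z + t d))`; it is positive because
a full-dimensional `V` does not lie in a hyperplane `{x | x ⬝ᵥ d = c}`. This makes `Φ` and its
derivative injective. `Φ(z)` is a convex combination of `V` with positive weights, hence interior.
Conversely, for `y` interior, `L(z) - y ⬝ᵥ z` grows at least like `ε ‖z‖`, so it attains its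
minimum, and there `Φ = y`. The inverse is analytic by the analytic inverse function theorem.
-/

/-- The momentum-like map `ψ_P(x) = (∑_{p ∈ V} x^p • p) / (∑_{q ∈ V} x^q)` associated
to a finite set `V` of points of `ℝⁿ`. -/
noncomputable def psi17 (n : ℕ) (V : Finset (Fin n → ℝ)) :
    (Fin n → ℝ) → (Fin n → ℝ) := fun x =>
  (∑ q ∈ V, ∏ j, x j ^ q j)⁻¹ • ∑ p ∈ V, (∏ j, x j ^ p j) • p

open Finset Real Set Filter Topology Function

section Gibbs
variable {α : Type*} {s : Finset α}

theorem sq_sum_mul_lt_sum_sq_mul_mul_sum {w b : α → ℝ} (hw : ∀ p ∈ s, 0 < w p)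
    (hb : ∃ p ∈ s, ∃ q ∈ s, b p ≠ b q) :
    (∑ p ∈ s, b p * w p) ^ 2 < (∑ p ∈ s, b p ^ 2 * w p) * ∑ p ∈ s, w p := by
  have lagrange : ∑ p ∈ s, ∑ q ∈ s, (b p - b q) ^ 2 * (w p * w q)
      = 2 * ((∑ p ∈ s, b p ^ 2 * w p) * (∑ p ∈ s, w p) - (∑ p ∈ s, b p * w p) ^ 2) := by
    calc _ = ∑ p ∈ s, ∑ q ∈ s, (b p ^ 2 * w p * w q + w p * (b q ^ 2 * w q)
          - 2 * (b p * w p * (b q * w q))) :=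
            sum_congr rfl fun p _ => sum_congr rfl fun q _ => by ring
      _ = _ := by
        simp only [sum_add_distrib, sum_sub_distrib, ← mul_sum, ← sum_mul]
        ring
  obtain ⟨p, hp, q, hq, hpq⟩ := hb
  have hpos : 0 < ∑ p ∈ s, ∑ q ∈ s, (b p - b q) ^ 2 * (w p * w q) := by
    have hterm : ∀ p ∈ s, ∀ q ∈ s, 0 ≤ (b p - b q) ^ 2 * (w p * w q) := fun p hp q hq =>
      mul_nonneg (sq_nonneg _) (mul_pos (hw p hp) (hw q hq)).le
    refine sum_pos' (fun r hr => sum_nonneg (hterm r hr))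
      ⟨p, hp, sum_pos' (hterm p hp) ⟨q, hq, ?_⟩⟩
    exact mul_pos (sq_pos_of_ne_zero (sub_ne_zero.2 hpq)) (mul_pos (hw p hp) (hw q hq))
  linarith

noncomputable def gibbsMean (s : Finset α) (a b : α → ℝ) (t : ℝ) : ℝ :=
  (∑ p ∈ s, b p * exp (a p + t * b p)) / ∑ p ∈ s, exp (a p + t * b p)

theorem hasDerivAt_sum_mul_exp (c a b : α → ℝ) (t : ℝ) :
    HasDerivAt (fun t => ∑ p ∈ s, c p * exp (a p + t * b p))
      (∑ p ∈ s, c p * b p * exp (a p + t * b p)) t :=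
  HasDerivAt.fun_sum fun p _ =>
    (((hasDerivAt_mul_const (b p)).const_add (a p)).exp.const_mul (c p)).congr_deriv (by ring)

theorem hasDerivAt_sum_exp (a b : α → ℝ) (t : ℝ) :
    HasDerivAt (fun t => ∑ p ∈ s, exp (a p + t * b p))
      (∑ p ∈ s, b p * exp (a p + t * b p)) t := by
  simpa using hasDerivAt_sum_mul_exp (s := s) 1 a b t

theorem hasDerivAt_log_sum_exp (hs : s.Nonempty) (a b : α → ℝ) (t : ℝ) :
    HasDerivAt (fun t => log (∑ p ∈ s, exp (a p + t * b p))) (gibbsMean s a b t) t :=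
  (hasDerivAt_sum_exp a b t).log (sum_pos (fun _ _ => exp_pos _) hs).ne'

theorem deriv_gibbsMean_pos (hs : s.Nonempty) (a : α → ℝ) {b : α → ℝ}
    (hb : ∃ p ∈ s, ∃ q ∈ s, b p ≠ b q) (t : ℝ) : 0 < deriv (gibbsMean s a b) t := by
  have hZ : 0 < ∑ p ∈ s, exp (a p + t * b p) := sum_pos (fun _ _ => exp_pos _) hs
  have hderiv : HasDerivAt (gibbsMean s a b) _ t :=
    (hasDerivAt_sum_mul_exp b a b t).fun_div (hasDerivAt_sum_exp a b t) hZ.ne'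
  rw [hderiv.deriv]
  refine div_pos ?_ (by positivity)
  simp only [← sq]
  linarith [sq_sum_mul_lt_sum_sq_mul_mul_sum (fun p _ => exp_pos (a p + t * b p)) hb]

theorem gibbsMean_strictMono (hs : s.Nonempty) (a : α → ℝ) {b : α → ℝ}
    (hb : ∃ p ∈ s, ∃ q ∈ s, b p ≠ b q) : StrictMono (gibbsMean s a b) :=
  strictMono_of_deriv_pos (deriv_gibbsMean_pos hs a hb)

end Gibbs

theorem Finset.nonempty_of_interior_convexHull_nonempty {E : Type*} [AddCommGroup E]
    [Module ℝ E] [TopologicalSpace E] {s : Finset E}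
    (hs : (interior (convexHull ℝ (s : Set E))).Nonempty) : s.Nonempty := by
  simpa using (convexHull_nonempty_iff (𝕜 := ℝ)).1 (hs.mono interior_subset)

theorem sum_smul_mem_interior_convexHull {E : Type*} [AddCommGroup E] [Module ℝ E]
    [TopologicalSpace E] [IsTopologicalAddGroup E] [ContinuousSMul ℝ E] {s : Finset E}
    (hs : (interior (convexHull ℝ (s : Set E))).Nonempty) {w : E → ℝ}
    (hw₀ : ∀ p ∈ s, 0 < w p) (hw₁ : ∑ p ∈ s, w p = 1) :
    ∑ p ∈ s, w p • p ∈ interior (convexHull ℝ (s : Set E)) := by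
  obtain ⟨y, hy⟩ := hs
  obtain ⟨c, hc₀, hc₁, hcy⟩ := (Finset.convexHull_eq s).subset (interior_subset hy)
  rw [Finset.centerMass_eq_of_sum_1 _ _ hc₁] at hcy
  have hsmall : ∀ᶠ t in 𝓝 (0 : ℝ), (∀ p ∈ s, t * c p < w p) ∧ t < 1 :=
    ((eventually_all_finset s).2 fun p hp =>
      (Continuous.tendsto' (by fun_prop) 0 0 (zero_mul (c p))).eventually_lt_const (hw₀ p hp)).and
      (eventually_lt_nhds one_pos)
  obtain ⟨t, ⟨htw, ht₁⟩, ht₀⟩ :=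
    ((hsmall.filter_mono nhdsWithin_le_nhds).and (self_mem_nhdsWithin (s := Ioi 0))).exists
  -- `∑ w p • p = t • y + (1 - t) • u`, with `u` the barycenter for the weights `w - t • c ≥ 0`.
  set e : E → ℝ := fun p => w p - t * c p
  have he₁ : ∑ p ∈ s, e p = 1 - t := by simp [e, sum_sub_distrib, ← mul_sum, hw₁, hc₁]
  have hu : s.centerMass e id ∈ convexHull ℝ (s : Set E) :=
    s.centerMass_mem_convexHull (fun p hp => sub_nonneg.2 (htw p hp).le)
      (he₁ ▸ sub_pos.2 ht₁) fun p hp => hp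
  have hx : ∑ p ∈ s, w p • p = t • y + (1 - t) • s.centerMass e id := by
    rw [centerMass, he₁, smul_smul, mul_inv_cancel₀ (sub_pos.2 ht₁).ne', one_smul, ← hcy]
    simp [e, sub_smul, sum_sub_distrib, smul_sum, mul_smul]
  rw [hx]
  exact (convex_convexHull ℝ _).combo_interior_self_mem_interior hy hu ht₀
    (sub_pos.2 ht₁).le (add_sub_cancel _ _)

theorem exists_analyticOnNhd_range_leftInverse {𝕜 E : Type*} [NontriviallyNormedField 𝕜]
    [CompleteSpace 𝕜] [NormedAddCommGroup E] [NormedSpace 𝕜 E] [FiniteDimensional 𝕜 E]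
    {f : E → E} (hf : ∀ x, AnalyticAt 𝕜 f x) (hinj : Injective f)
    (hf' : ∀ x, Injective (fderiv 𝕜 f x)) :
    ∃ g : E → E, AnalyticOnNhd 𝕜 g (range f) ∧ LeftInverse g f := by
  have : CompleteSpace E := FiniteDimensional.complete 𝕜 E
  let f' : E → E ≃L[𝕜] E := fun x =>
    (LinearEquiv.ofInjectiveEndo (fderiv 𝕜 f x : E →ₗ[𝕜] E) (hf' x)).toContinuousLinearEquiv
  have hstrict : ∀ x, HasStrictFDerivAt f (f' x : E →L[𝕜] E) x := fun x =>
    (hf x).hasStrictFDerivAt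
  have hemb : IsOpenEmbedding f := .of_continuous_injective_isOpenMap
    (continuous_iff_continuousAt.2 fun x => (hf x).continuousAt) hinj
    (isOpenMap_of_hasStrictFDerivAt_equiv hstrict)
  refine ⟨(hemb.toOpenPartialHomeomorph f).symm, ?_, fun x => hemb.toOpenPartialHomeomorph_left_inv⟩
  rintro _ ⟨x, rfl⟩
  exact (hemb.toOpenPartialHomeomorph f).analyticAt_symm' (mem_univ x) (hf x)
    (hstrict x).hasFDerivAt.fderiv

section MomentumMap
variable {ι : Type*} [Fintype ι] {V : Finset (ι → ℝ)}

noncomputable def logSumExp (V : Finset (ι → ℝ)) (z : ι → ℝ) : ℝ :=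
  log (∑ p ∈ V, exp (p ⬝ᵥ z))

noncomputable def momentumMap (V : Finset (ι → ℝ)) (z : ι → ℝ) : ι → ℝ :=
  (∑ q ∈ V, exp (q ⬝ᵥ z))⁻¹ • ∑ p ∈ V, exp (p ⬝ᵥ z) • p

theorem dotProduct_add_smul (p z d : ι → ℝ) (t : ℝ) :
    p ⬝ᵥ (z + t • d) = p ⬝ᵥ z + t * p ⬝ᵥ d := by
  rw [dotProduct_add, dotProduct_smul, smul_eq_mul]

theorem logSumExp_add_smul (z d : ι → ℝ) (t : ℝ) :
    logSumExp V (z + t • d) = log (∑ p ∈ V, exp (p ⬝ᵥ z + t * p ⬝ᵥ d)) := by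
  simp only [logSumExp, dotProduct_add_smul]

theorem momentumMap_add_smul_dotProduct (z d : ι → ℝ) (t : ℝ) :
    momentumMap V (z + t • d) ⬝ᵥ d = gibbsMean V (· ⬝ᵥ z) (· ⬝ᵥ d) t := by
  simp only [momentumMap, gibbsMean, smul_dotProduct, sum_dotProduct, dotProduct_add_smul,
    smul_eq_mul, div_eq_inv_mul]
  simp_rw [mul_comm (exp _)]

theorem exists_dotProduct_ne (hV : (interior (convexHull ℝ (V : Set (ι → ℝ)))).Nonempty)
    {d : ι → ℝ} (hd : d ≠ 0) : ∃ p ∈ V, ∃ q ∈ V, p ⬝ᵥ d ≠ q ⬝ᵥ d := by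
  by_contra! hconst
  obtain ⟨p₀, hp₀⟩ := Finset.nonempty_of_interior_convexHull_nonempty hV
  obtain ⟨y, hy⟩ := hV
  have hhull : convexHull ℝ (V : Set (ι → ℝ)) ⊆ {x | d ⬝ᵥ x = d ⬝ᵥ p₀} :=
    convexHull_min (fun p hp => by simpa [dotProduct_comm d] using hconst p hp p₀ hp₀)
      (convex_hyperplane (dotProductBilin ℝ ℝ d).isLinear _)
  have hline : ∀ᶠ t in 𝓝[≠] (0 : ℝ), y + t • d ∈ convexHull ℝ (V : Set (ι → ℝ)) :=
    nhdsWithin_le_nhds <| (Continuous.tendsto' (by fun_prop) 0 y (by simp)).eventually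
      (mem_interior_iff_mem_nhds.1 hy)
  obtain ⟨t, ht, ht₀⟩ := (hline.and self_mem_nhdsWithin).exists
  have h₁ := hhull ht
  have h₀ := hhull (interior_subset hy)
  simp only [mem_ofPred_eq, dotProduct_add, dotProduct_smul, smul_eq_mul] at h₀ h₁
  have hdd : t * (d ⬝ᵥ d) = 0 := by linarith
  exact hd (dotProduct_self_eq_zero.1 ((mul_eq_zero.1 hdd).resolve_left ht₀))

theorem momentumMap_injective (hV : (interior (convexHull ℝ (V : Set (ι → ℝ)))).Nonempty) :
    Injective (momentumMap V) := by
  intro z₁ z₂ h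
  by_contra hne
  have hmono := gibbsMean_strictMono (Finset.nonempty_of_interior_convexHull_nonempty hV)
    (· ⬝ᵥ z₁) (exists_dotProduct_ne hV (sub_ne_zero.2 (Ne.symm hne))) zero_lt_one
  rw [← momentumMap_add_smul_dotProduct, ← momentumMap_add_smul_dotProduct, zero_smul, add_zero,
    one_smul, add_sub_cancel, h] at hmono
  exact lt_irrefl _ hmono

theorem momentumMap_mem_interior (hV : (interior (convexHull ℝ (V : Set (ι → ℝ)))).Nonempty)
    (z : ι → ℝ) : momentumMap V z ∈ interior (convexHull ℝ (V : Set (ι → ℝ))) := by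
  have hZ : 0 < ∑ q ∈ V, exp (q ⬝ᵥ z) :=
    sum_pos (fun _ _ => exp_pos _) (Finset.nonempty_of_interior_convexHull_nonempty hV)
  rw [momentumMap, smul_sum]
  simp_rw [smul_smul]
  exact sum_smul_mem_interior_convexHull hV (fun p _ => by positivity)
    (by rw [← mul_sum, inv_mul_cancel₀ hZ.ne'])

theorem sq_norm_le_dotProduct_self (z : ι → ℝ) : ‖z‖ ^ 2 ≤ z ⬝ᵥ z := by
  have hz : 0 ≤ z ⬝ᵥ z := sum_nonneg fun i _ => mul_self_nonneg (z i)
  refine (Real.le_sqrt (norm_nonneg _) hz).1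
    ((pi_norm_le_iff_of_nonneg (sqrt_nonneg _)).2 fun i => ?_)
  rw [Real.norm_eq_abs, Real.le_sqrt (abs_nonneg _) hz, sq_abs, sq]
  exact single_le_sum (f := fun j => z j * z j) (fun j _ => mul_self_nonneg _) (mem_univ i)

theorem dotProduct_le_logSumExp {u : ι → ℝ} (hu : u ∈ convexHull ℝ (V : Set (ι → ℝ)))
    (z : ι → ℝ) : u ⬝ᵥ z ≤ logSumExp V z := by
  refine convexHull_min (fun p hp => ?_)
    (convex_halfSpace_le ((dotProductBilin ℝ ℝ).flip z).isLinear _) hu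
  calc p ⬝ᵥ z = log (exp (p ⬝ᵥ z)) := (log_exp _).symm
    _ ≤ logSumExp V z := log_le_log (exp_pos _)
        (single_le_sum (f := fun q => exp (q ⬝ᵥ z)) (fun q _ => (exp_pos _).le) (mem_coe.1 hp))

theorem tendsto_logSumExp_sub_dotProduct {y : ι → ℝ}
    (hy : y ∈ interior (convexHull ℝ (V : Set (ι → ℝ)))) :
    Tendsto (fun z => logSumExp V z - y ⬝ᵥ z) (cocompact _) atTop := by
  obtain ⟨ε, hε, hball⟩ := Metric.mem_nhds_iff.1 (mem_interior_iff_mem_nhds.1 hy)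
  refine tendsto_atTop_mono (fun z => ?_)
    (tendsto_norm_cocompact_atTop.const_mul_atTop (half_pos hε))
  -- Test the bound `dotProduct_le_logSumExp` at the point `y + (ε / 2) • (z / ‖z‖)` of the hull.
  set u := y + (ε / 2 * ‖z‖⁻¹) • z
  have hu : u ∈ Metric.ball y ε := by
    rw [Metric.mem_ball, dist_eq_norm, add_sub_cancel_left, norm_smul, norm_mul, norm_inv,
      norm_norm, Real.norm_of_nonneg (half_pos hε).le, mul_assoc]
    calc ε / 2 * (‖z‖⁻¹ * ‖z‖) ≤ ε / 2 :=
          mul_le_of_le_one_right (half_pos hε).le (inv_mul_le_one_of_le₀ le_rfl (norm_nonneg _))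
      _ < ε := half_lt_self hε
  have hnorm : ‖z‖ ≤ ‖z‖⁻¹ * z ⬝ᵥ z := by
    rcases (norm_nonneg z).eq_or_lt with h | h
    · simp [← h]
    · rw [le_inv_mul_iff₀ h, ← sq]
      exact sq_norm_le_dotProduct_self z
  have hle := dotProduct_le_logSumExp (hball hu) z
  simp only [u, add_dotProduct, smul_dotProduct, smul_eq_mul, mul_assoc] at hle
  linarith [mul_le_mul_of_nonneg_left hnorm (half_pos hε).le]

theorem momentumMap_eq_of_forall_le (hV : V.Nonempty) {y z₀ : ι → ℝ}
    (hmin : ∀ z, logSumExp V z₀ - y ⬝ᵥ z₀ ≤ logSumExp V z - y ⬝ᵥ z) : momentumMap V z₀ = y := by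
  suffices ∀ d, momentumMap V z₀ ⬝ᵥ d = y ⬝ᵥ d by
    classical
    ext i
    simpa [dotProduct_single] using this (Pi.single i 1)
  intro d
  have hderiv : HasDerivAt (fun t : ℝ => logSumExp V (z₀ + t • d) - y ⬝ᵥ (z₀ + t • d))
      (gibbsMean V (· ⬝ᵥ z₀) (· ⬝ᵥ d) 0 - y ⬝ᵥ d) 0 := by
    simp only [logSumExp_add_smul, dotProduct_add_smul]
    exact (hasDerivAt_log_sum_exp hV _ _ 0).sub ((hasDerivAt_mul_const _).const_add _)
  have hlocal : IsLocalMin (fun t : ℝ => logSumExp V (z₀ + t • d) - y ⬝ᵥ (z₀ + t • d)) 0 :=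
    Eventually.of_forall fun t => by simpa using hmin (z₀ + t • d)
  have hcrit := hlocal.hasDerivAt_eq_zero hderiv
  rw [← momentumMap_add_smul_dotProduct, zero_smul, add_zero] at hcrit
  linarith

theorem continuous_logSumExp (hV : V.Nonempty) : Continuous (logSumExp V) :=
  Continuous.log (by fun_prop) fun _ => (sum_pos (fun _ _ => exp_pos _) hV).ne'

theorem range_momentumMap (hV : (interior (convexHull ℝ (V : Set (ι → ℝ)))).Nonempty) :
    range (momentumMap V) = interior (convexHull ℝ (V : Set (ι → ℝ))) := by
  refine (range_subset_iff.2 (momentumMap_mem_interior hV)).antisymm fun y hy => ?_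
  have hVne := Finset.nonempty_of_interior_convexHull_nonempty hV
  obtain ⟨z₀, hz₀⟩ := ((continuous_logSumExp hVne).sub (by fun_prop)).exists_forall_le
    (tendsto_logSumExp_sub_dotProduct hy)
  exact ⟨z₀, momentumMap_eq_of_forall_le hVne hz₀⟩

theorem analyticAt_dotProduct (p z : ι → ℝ) : AnalyticAt ℝ (p ⬝ᵥ ·) z :=
  (LinearMap.toContinuousLinearMap (dotProductBilin ℝ ℝ p)).analyticAt z

theorem analyticAt_momentumMap (hV : V.Nonempty) (z : ι → ℝ) :
    AnalyticAt ℝ (momentumMap V) z :=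
  ((Finset.analyticAt_fun_sum _ fun p _ => (analyticAt_dotProduct p z).rexp).inv
    (sum_pos (fun _ _ => exp_pos _) hV).ne').fun_smul
    (Finset.analyticAt_fun_sum _ fun p _ => (analyticAt_dotProduct p z).rexp.smul analyticAt_const)

theorem injective_fderiv_momentumMap
    (hV : (interior (convexHull ℝ (V : Set (ι → ℝ)))).Nonempty) (z : ι → ℝ) :
    Injective (fderiv ℝ (momentumMap V) z) := by
  have hVne := Finset.nonempty_of_interior_convexHull_nonempty hV
  refine (injective_iff_map_eq_zero _).2 fun d hd => by_contra fun hd₀ => ?_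
  have hcurve : HasDerivAt (fun t : ℝ => momentumMap V (z + t • d))
      (fderiv ℝ (momentumMap V) z d) 0 := by
    have hline : HasDerivAt (fun t : ℝ => z + t • d) d 0 := by
      simpa using ((hasDerivAt_id (0 : ℝ)).smul_const d).const_add z
    have hΦ : HasFDerivAt (momentumMap V) (fderiv ℝ (momentumMap V) z) (z + (0 : ℝ) • d) := by
      simpa using (analyticAt_momentumMap hVne z).differentiableAt.hasFDerivAt
    exact hΦ.comp_hasDerivAt 0 hline
  have hpair : HasDerivAt (fun t : ℝ => momentumMap V (z + t • d) ⬝ᵥ d)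
      (fderiv ℝ (momentumMap V) z d ⬝ᵥ d) 0 :=
    HasDerivAt.fun_sum fun i _ => (hasDerivAt_pi.1 hcurve i).mul_const (d i)
  have hpos := deriv_gibbsMean_pos hVne (· ⬝ᵥ z) (exists_dotProduct_ne hV hd₀) 0
  rw [← funext (momentumMap_add_smul_dotProduct (V := V) z d), hpair.deriv, hd,
    zero_dotProduct] at hpos
  exact lt_irrefl _ hpos

end MomentumMap

theorem prod_exp_rpow_eq_exp_dotProduct {n : ℕ} (p z : Fin n → ℝ) :
    ∏ j, exp (z j) ^ p j = exp (p ⬝ᵥ z) := by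
  simp only [← exp_mul, ← exp_sum, dotProduct, mul_comm]

theorem psi17_exp {n : ℕ} (V : Finset (Fin n → ℝ)) (z : Fin n → ℝ) :
    psi17 n V (fun i => exp (z i)) = momentumMap V z := by
  simp only [psi17, momentumMap, prod_exp_rpow_eq_exp_dotProduct]

theorem psi17_eq_momentumMap_log {n : ℕ} (V : Finset (Fin n → ℝ)) {x : Fin n → ℝ}
    (hx : ∀ i, 0 < x i) : psi17 n V x = momentumMap V (fun i => log (x i)) := by
  conv_lhs => rw [← funext fun i => exp_log (hx i)]
  exact psi17_exp V _

theorem analyticOnNhd_psi17 {n : ℕ} {V : Finset (Fin n → ℝ)} (hV : V.Nonempty) :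
    AnalyticOnNhd ℝ (psi17 n V) {x | ∀ i, 0 < x i} := by
  intro x hx
  have hlog : AnalyticAt ℝ (fun x : Fin n → ℝ => fun i => log (x i)) x :=
    AnalyticAt.pi fun i => (analyticAt_log (hx i)).comp (f := fun x : Fin n → ℝ => x i)
      ((ContinuousLinearMap.proj (R := ℝ) (φ := fun _ : Fin n => ℝ) i).analyticAt x)
  refine ((analyticAt_momentumMap hV _).comp hlog).congr ?_
  filter_upwards [eventually_all.2 fun i => (continuous_apply i).continuousAt.eventually
    (lt_mem_nhds (hx i))] with y hy
  exact (psi17_eq_momentumMap_log V hy).symm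

theorem stmt_17_general (n : ℕ) (V : Finset (Fin n → ℝ))
    (hdim : (interior (convexHull ℝ (V : Set (Fin n → ℝ)))).Nonempty) :
    Set.BijOn (psi17 n V) {x : Fin n → ℝ | ∀ i, 0 < x i}
      (interior (convexHull ℝ (V : Set (Fin n → ℝ)))) ∧
    AnalyticOnNhd ℝ (psi17 n V) {x : Fin n → ℝ | ∀ i, 0 < x i} ∧
    ∃ g : (Fin n → ℝ) → (Fin n → ℝ),
      AnalyticOnNhd ℝ g (interior (convexHull ℝ (V : Set (Fin n → ℝ)))) ∧
      (∀ x : Fin n → ℝ, (∀ i, 0 < x i) → g (psi17 n V x) = x) ∧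
      (∀ y ∈ interior (convexHull ℝ (V : Set (Fin n → ℝ))), psi17 n V (g y) = y) := by
  have hVne := Finset.nonempty_of_interior_convexHull_nonempty hdim
  obtain ⟨g, hg, hgΦ⟩ := exists_analyticOnNhd_range_leftInverse (analyticAt_momentumMap hVne)
    (momentumMap_injective hdim) (injective_fderiv_momentumMap hdim)
  have hrange := range_momentumMap hdim
  rw [hrange] at hg
  set G : (Fin n → ℝ) → Fin n → ℝ := fun y i => exp (g y i)
  have hleft : ∀ x : Fin n → ℝ, (∀ i, 0 < x i) → G (psi17 n V x) = x := fun x hx => by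
    ext i
    simp [G, psi17_eq_momentumMap_log V hx, hgΦ _, exp_log (hx i)]
  have hright : ∀ y ∈ interior (convexHull ℝ (V : Set (Fin n → ℝ))), psi17 n V (G y) = y := by
    rintro _ hy
    obtain ⟨z, rfl⟩ := hrange.symm ▸ hy
    rw [psi17_exp, hgΦ]
  have hmaps : MapsTo (psi17 n V) {x | ∀ i, 0 < x i}
      (interior (convexHull ℝ (V : Set (Fin n → ℝ)))) := fun x hx => by
    rw [psi17_eq_momentumMap_log V hx]
    exact momentumMap_mem_interior hdim _
  have hGan : AnalyticOnNhd ℝ G (interior (convexHull ℝ (V : Set (Fin n → ℝ)))) :=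
    fun y hy => AnalyticAt.pi fun i =>
      (((ContinuousLinearMap.proj (R := ℝ) (φ := fun _ : Fin n => ℝ) i).analyticAt _).comp
        (hg y hy)).rexp
  exact ⟨InvOn.bijOn ⟨fun x hx => hleft x hx, hright⟩ hmaps fun y _ i => exp_pos _,
    analyticOnNhd_psi17 hVne, G, hGan, hleft, hright⟩

/-- For an `n`-dimensional convex compact polytope `P = conv(V)` in `ℝⁿ` with vertex set
`V`, the map `ψ_P` is a real analytic diffeomorphism from the open positive orthant onto
the interior of `P`: it is a bijection onto the interior, analytic, with analytic
inverse. -/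
theorem stmt_17 (n : ℕ) (V : Finset (Fin n → ℝ))
    (hvert : ∀ v ∈ V, v ∉ convexHull ℝ ((V : Set (Fin n → ℝ)) \ {v}))
    (hdim : (interior (convexHull ℝ (V : Set (Fin n → ℝ)))).Nonempty) :
    Set.BijOn (psi17 n V) {x : Fin n → ℝ | ∀ i, 0 < x i}
      (interior (convexHull ℝ (V : Set (Fin n → ℝ)))) ∧
    AnalyticOnNhd ℝ (psi17 n V) {x : Fin n → ℝ | ∀ i, 0 < x i} ∧
    ∃ g : (Fin n → ℝ) → (Fin n → ℝ),
      AnalyticOnNhd ℝ g (interior (convexHull ℝ (V : Set (Fin n → ℝ)))) ∧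
      (∀ x : Fin n → ℝ, (∀ i, 0 < x i) → g (psi17 n V x) = x) ∧
      (∀ y ∈ interior (convexHull ℝ (V : Set (Fin n → ℝ))), psi17 n V (g y) = y) :=
  stmt_17_general n V hdim
end

section
/- Let F(u) = -a(a-c)(a-c-1)u³ + (a-c)[2a(b-d+1) + b(a-c+1)]u² + (d-b)[a(b-d+1) + 2b(a-c+1)]u + b(b-d)(b-d-1) with real parameters a, b, c, d satisfying a, d > 0 and b, c < 0, and let F̂(u) be the analogous cubic with (a,b) and (c,d) interchanged. Then it is impossible for both F and F̂ to each have 3 positive roots; equivalently, at least one of F, F̂ has at most 2 positive roots. -/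
/-- Vieta-style identities for a cubic with three distinct roots. -/
lemma cubic_vieta (c3 c2 c1 c0 x y z : ℝ) (hxy : x ≠ y) (hxz : x ≠ z) (hyz : y ≠ z)
    (hx : c3 * x ^ 3 + c2 * x ^ 2 + c1 * x + c0 = 0)
    (hy : c3 * y ^ 3 + c2 * y ^ 2 + c1 * y + c0 = 0)
    (hz : c3 * z ^ 3 + c2 * z ^ 2 + c1 * z + c0 = 0) :
    c2 = -(c3 * (x + y + z)) ∧ c1 = c3 * (x * y + y * z + z * x) ∧
      c0 = -(c3 * (x * y * z)) := by
  have h1 : (x - y) * (c3 * (x ^ 2 + x * y + y ^ 2) + c2 * (x + y) + c1) = 0 := by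
    linear_combination hx - hy
  have h1' : c3 * (x ^ 2 + x * y + y ^ 2) + c2 * (x + y) + c1 = 0 :=
    (mul_eq_zero.mp h1).resolve_left (sub_ne_zero.mpr hxy)
  have h2 : (x - z) * (c3 * (x ^ 2 + x * z + z ^ 2) + c2 * (x + z) + c1) = 0 := by
    linear_combination hx - hz
  have h2' : c3 * (x ^ 2 + x * z + z ^ 2) + c2 * (x + z) + c1 = 0 :=
    (mul_eq_zero.mp h2).resolve_left (sub_ne_zero.mpr hxz)
  have h3 : (y - z) * (c3 * (x + y + z) + c2) = 0 := by
    linear_combination h1' - h2'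
  have h3' : c3 * (x + y + z) + c2 = 0 :=
    (mul_eq_zero.mp h3).resolve_left (sub_ne_zero.mpr hyz)
  have hc2 : c2 = -(c3 * (x + y + z)) := by linarith
  have hc1 : c1 = c3 * (x * y + y * z + z * x) := by
    linear_combination h1' - (x + y) * h3'
  have hc0 : c0 = -(c3 * (x * y * z)) := by
    linear_combination hx - x ^ 2 * hc2 - x * hc1
  exact ⟨hc2, hc1, hc0⟩

set_option maxHeartbeats 1000000 in
/-- With `a, d > 0` and `b, c < 0`, the cubics
`F(u) = -a(a-c)(a-c-1)u³ + (a-c)[2a(b-d+1)+b(a-c+1)]u² + (d-b)[a(b-d+1)+2b(a-c+1)]u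
+ b(b-d)(b-d-1)` and `F̂` (obtained by interchanging `(a,b)` with `(c,d)`) cannot both
have `3` positive roots: at least one of them has at most `2` positive roots. -/
theorem stmt_19 (a b c d : ℝ) (ha : 0 < a) (hd : 0 < d) (hb : b < 0) (hc : c < 0) :
    ¬∃ (S T : Finset ℝ), S.card = 3 ∧ T.card = 3 ∧
      (∀ u ∈ S, 0 < u ∧
        -a * (a - c) * (a - c - 1) * u ^ 3 +
          (a - c) * (2 * a * (b - d + 1) + b * (a - c + 1)) * u ^ 2 +
          (d - b) * (a * (b - d + 1) + 2 * b * (a - c + 1)) * u +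
          b * (b - d) * (b - d - 1) = 0) ∧
      (∀ u ∈ T, 0 < u ∧
        -c * (c - a) * (c - a - 1) * u ^ 3 +
          (c - a) * (2 * c * (d - b + 1) + d * (c - a + 1)) * u ^ 2 +
          (b - d) * (c * (d - b + 1) + 2 * d * (c - a + 1)) * u +
          d * (d - b) * (d - b - 1) = 0) := by
  rintro ⟨S, T, hS3, _hT3, hS, _hT⟩
  obtain ⟨x, y, z, hxy, hxz, hyz, rfl⟩ := Finset.card_eq_three.mp hS3
  obtain ⟨hxpos, hxeq⟩ := hS x (by simp)
  obtain ⟨hypos, hyeq⟩ := hS y (by simp)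
  obtain ⟨hzpos, hzeq⟩ := hS z (by simp)
  set c3 : ℝ := -a * (a - c) * (a - c - 1) with hc3def
  set c2 : ℝ := (a - c) * (2 * a * (b - d + 1) + b * (a - c + 1)) with hc2def
  set c1 : ℝ := (d - b) * (a * (b - d + 1) + 2 * b * (a - c + 1)) with hc1def
  set c0 : ℝ := b * (b - d) * (b - d - 1) with hc0def
  have hx' : c3 * x ^ 3 + c2 * x ^ 2 + c1 * x + c0 = 0 := by linear_combination hxeq
  have hy' : c3 * y ^ 3 + c2 * y ^ 2 + c1 * y + c0 = 0 := by linear_combination hyeq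
  have hz' : c3 * z ^ 3 + c2 * z ^ 2 + c1 * z + c0 = 0 := by linear_combination hzeq
  obtain ⟨hc2v, hc1v, hc0v⟩ := cubic_vieta c3 c2 c1 c0 x y z hxy hxz hyz hx' hy' hz'
  -- the constant term is negative
  have hdb : 0 < d - b := by linarith
  have hdb1 : (0 : ℝ) < 1 + d - b := by linarith
  have hc0neg : c0 < 0 := by
    have h := mul_pos (mul_pos (neg_pos.mpr hb) hdb) hdb1
    rw [hc0def]; nlinarith [h]
  have hxyz : 0 < x * y * z := by positivity
  -- hence the leading coefficient is positive
  have hc3pos : 0 < c3 := by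
    by_contra h
    push_neg at h
    have : 0 ≤ -c3 * (x * y * z) := mul_nonneg (by linarith) hxyz.le
    nlinarith [hc0v, hc0neg]
  -- sign of the quadratic coefficient
  have hsum : 0 < x + y + z := by linarith
  have hc2neg : c2 < 0 := by
    have := mul_pos hc3pos hsum
    linarith [hc2v]
  have he2 : 0 < x * y + y * z + z * x := by positivity
  have hc1pos : 0 < c1 := by
    have := mul_pos hc3pos he2
    linarith [hc1v]
  -- extract signs of the bracketed factors
  have hac : 0 < a - c := by linarith
  have hM : 2 * a * (b - d + 1) + b * (a - c + 1) < 0 := by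
    by_contra h
    push_neg at h
    have : 0 ≤ c2 := by rw [hc2def]; exact mul_nonneg hac.le h
    linarith
  have hN : 0 < a * (b - d + 1) + 2 * b * (a - c + 1) := by
    by_contra h
    push_neg at h
    have : c1 ≤ 0 := by
      rw [hc1def]
      exact mul_nonpos_of_nonneg_of_nonpos hdb.le h
    linarith
  -- final contradiction: 2N - M = 3 b (a - c + 1) < 0
  have hb1 : b * (a - c + 1) < 0 := mul_neg_of_neg_of_pos hb (by linarith)
  nlinarith [hM, hN, hb1]
end
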